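/- arXiv:1509.00996 — 7 statements merged into one kernel-verified Lean document; each statement's English description precedes it below -/
import Mathlib

section
/- The leftmost-outermost order on contexts is total: if C and C' are both prefixes of the same term t (i.e., there exist terms u, u' with C⟨u⟩ = t and C'⟨u'⟩ = t), then either C ≺_LO C', or C' ≺_LO C, or C = C'. -/
inductive Term : Type
  | var : ℕ → Term
  | lam : ℕ → Term → Term
  | app : Term → Term → Term
  | sub : Term → ℕ → Term → Term
  deriving DecidableEq

namespace Term
def fv : Term → Finset ℕ
  | var x => {x}
  | lam x t => t.fv.erase x
  | app t u => t.fv ∪ u.fv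
  | sub t x u => t.fv.erase x ∪ u.fv
end Term

inductive Ctx : Type
  | hole : Ctx
  | lam : ℕ → Ctx → Ctx
  | appL : Ctx → Term → Ctx
  | appR : Term → Ctx → Ctx
  | subL : Ctx → ℕ → Term → Ctx
  | subR : Term → ℕ → Ctx → Ctx
  deriving DecidableEq

namespace Ctx
def plug : Ctx → Term → Term
  | hole, t => t
  | lam x C, t => .lam x (C.plug t)
  | appL C u, t => .app (C.plug t) u
  | appR u C, t => .app u (C.plug t)
  | subL C x u, t => .sub (C.plug t) x u
  | subR u x C, t => .sub u x (C.plug t)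

/-- Composition of contexts: `C.comp D` is `C⟨D⟩` (plugging `D` into the hole of `C`). -/
def comp : Ctx → Ctx → Ctx
  | hole, D => D
  | lam x C, D => lam x (C.comp D)
  | appL C u, D => appL (C.comp D) u
  | appR u C, D => appR u (C.comp D)
  | subL C x u, D => subL (C.comp D) x u
  | subR u x C, D => subR u x (C.comp D)

/-- Variables bound above the hole. -/
def binders : Ctx → Finset ℕ
  | hole => ∅
  | lam x C => insert x C.binders
  | appL C _ => C.binders
  | appR _ C => C.binders
  | subL C x _ => insert x C.binders
  | subR _ _ C => C.binders

/-- Left free variables of a context. -/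
def lfv : Ctx → Finset ℕ
  | hole => ∅
  | lam x C => C.lfv.erase x
  | appL C _ => C.lfv
  | appR t C => t.fv ∪ C.lfv
  | subL C x _ => C.lfv.erase x
  | subR t x C => t.fv.erase x ∪ C.lfv
end Ctx

/-- Substitution contexts `L ::= ⟨·⟩ | L[x←t]`. -/
inductive IsSubCtx : Ctx → Prop
  | hole : IsSubCtx .hole
  | sub {L : Ctx} {x : ℕ} {t : Term} : IsSubCtx L → IsSubCtx (.subL L x t)

/-- Multiplicative root rule: `L⟨λx.b⟩ a → L⟨b[x←a]⟩`. -/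
def RootM (t u : Term) : Prop :=
  ∃ (L : Ctx) (x : ℕ) (b a : Term),
    IsSubCtx L ∧ t = .app (L.plug (.lam x b)) a ∧ u = L.plug (.sub b x a)

/-- Multiplicative step at position `C`. -/
def MStepAt (C : Ctx) (t u : Term) : Prop :=
  ∃ t' u', RootM t' u' ∧ t = C.plug t' ∧ u = C.plug u'

/-- Exponential step in compact form at position `Cp = C'⟨C[x←w]⟩`, recording the
duplicated term `w`. -/
def EStepAtDup (Cp : Ctx) (t u w : Term) : Prop :=
  ∃ (C' C : Ctx) (x : ℕ),
    x ∉ C.binders ∧ Cp = C'.comp (.subL C x w) ∧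
    t = Cp.plug (.var x) ∧ u = Cp.plug w

/-- Exponential step (compact form) at position `Cp`. -/
def EStepAt (Cp : Ctx) (t u : Term) : Prop := ∃ w, EStepAtDup Cp t u w

def StepAt (C : Ctx) (t u : Term) : Prop := MStepAt C t u ∨ EStepAt C t u

def Step (t u : Term) : Prop := ∃ C, StepAt C t u

def TermNormal (t : Term) : Prop := ∀ u, ¬ Step t u

/-- A term is neutral if it is normal and not of the form `L⟨λx.b⟩`. -/
def Neutral (t : Term) : Prop :=
  TermNormal t ∧ ¬ ∃ (L : Ctx) (x : ℕ) (b : Term), IsSubCtx L ∧ t = L.plug (.lam x b)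

/-- `C` is a prefix of the term `t`. -/
def CtxPrefix (C : Ctx) (t : Term) : Prop := ∃ u, C.plug u = t

/-- Outside-in order on contexts. -/
inductive OutIn : Ctx → Ctx → Prop
  | root {C : Ctx} : C ≠ .hole → OutIn .hole C
  | closure {C C' : Ctx} (D : Ctx) : OutIn C C' → OutIn (D.comp C) (D.comp C')

/-- Left-to-right order on contexts. -/
inductive LtoR : Ctx → Ctx → Prop
  | app {C C' : Ctx} {t u : Term} :
      CtxPrefix C t → CtxPrefix C' u → LtoR (.appL C u) (.appR t C')
  | sub {C C' : Ctx} {t u : Term} {x : ℕ} :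
      CtxPrefix C t → CtxPrefix C' u → LtoR (.subL C x u) (.subR t x C')
  | closure {C C' : Ctx} (D : Ctx) : LtoR C C' → LtoR (D.comp C) (D.comp C')

/-- Left-to-right outside-in order `≺_LO`. -/
def LOOrder (C C' : Ctx) : Prop := OutIn C C' ∨ LtoR C C'

/-- LO contexts. -/
def IsLOCtx (C : Ctx) : Prop :=
  (∀ (C' : Ctx) (t : Term) (C'' : Ctx), C = C'.comp (.appR t C'') → Neutral t) ∧
  (∀ (C' C'' : Ctx) (t : Term), C = C'.comp (.appL C'' t) →
      ¬ ∃ (L : Ctx) (x : ℕ) (C''' : Ctx), IsSubCtx L ∧ C'' = L.comp (.lam x C''')) ∧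
  (∀ (C' C'' : Ctx) (x : ℕ) (u : Term), C = C'.comp (.subL C'' x u) → x ∉ C''.lfv)

def IsRedex (t : Term) (C : Ctx) : Prop := ∃ u, StepAt C t u

/-- `C` is the position of the leftmost-outermost redex of `t` (every other redex
position is greater in the LO order). -/
def IsLOPos (t : Term) (C : Ctx) : Prop :=
  ∀ C', IsRedex t C' → C' ≠ C → LOOrder C C'


lemma LOOrder.lift (D : Ctx) {C C' : Ctx} (h : LOOrder C C') :
    LOOrder (D.comp C) (D.comp C') :=
  h.elim (fun o => Or.inl (o.closure D)) (fun l => Or.inr (l.closure D))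

lemma lo_tri {C C' : Ctx} (D : Ctx)
    (h : LOOrder C C' ∨ LOOrder C' C ∨ C = C') :
    LOOrder (D.comp C) (D.comp C') ∨ LOOrder (D.comp C') (D.comp C) ∨
      D.comp C = D.comp C' := by
  rcases h with h | h | h
  · exact Or.inl (h.lift D)
  · exact Or.inr (Or.inl (h.lift D))
  · exact Or.inr (Or.inr (by rw [h]))

lemma lo_total_aux : ∀ (C C' : Ctx) (u u' : Term), C'.plug u' = C.plug u →
    LOOrder C C' ∨ LOOrder C' C ∨ C = C'
  | .hole, .hole, _, _, _ => Or.inr (Or.inr rfl)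
  | .hole, .lam _ _, _, _, _ => Or.inl (Or.inl (OutIn.root nofun))
  | .hole, .appL _ _, _, _, _ => Or.inl (Or.inl (OutIn.root nofun))
  | .hole, .appR _ _, _, _, _ => Or.inl (Or.inl (OutIn.root nofun))
  | .hole, .subL _ _ _, _, _, _ => Or.inl (Or.inl (OutIn.root nofun))
  | .hole, .subR _ _ _, _, _, _ => Or.inl (Or.inl (OutIn.root nofun))
  | .lam _ _, .hole, _, _, _ => Or.inr (Or.inl (Or.inl (OutIn.root nofun)))
  | .appL _ _, .hole, _, _, _ => Or.inr (Or.inl (Or.inl (OutIn.root nofun)))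
  | .appR _ _, .hole, _, _, _ => Or.inr (Or.inl (Or.inl (OutIn.root nofun)))
  | .subL _ _ _, .hole, _, _, _ => Or.inr (Or.inl (Or.inl (OutIn.root nofun)))
  | .subR _ _ _, .hole, _, _, _ => Or.inr (Or.inl (Or.inl (OutIn.root nofun)))
  | .lam x C, .lam y C', u, u', h => by
    simp only [Ctx.plug, Term.lam.injEq] at h
    obtain ⟨rfl, h⟩ := h
    exact lo_tri (Ctx.lam y Ctx.hole) (lo_total_aux C C' u u' h)
  | .appL C t, .appL C' t', u, u', h => by
    simp only [Ctx.plug, Term.app.injEq] at h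
    obtain ⟨h, rfl⟩ := h
    exact lo_tri (Ctx.appL Ctx.hole t') (lo_total_aux C C' u u' h)
  | .appR t C, .appR t' C', u, u', h => by
    simp only [Ctx.plug, Term.app.injEq] at h
    obtain ⟨rfl, h⟩ := h
    exact lo_tri (Ctx.appR t' Ctx.hole) (lo_total_aux C C' u u' h)
  | .subL C x t, .subL C' y t', u, u', h => by
    simp only [Ctx.plug, Term.sub.injEq] at h
    obtain ⟨h, rfl, rfl⟩ := h
    exact lo_tri (Ctx.subL Ctx.hole y t') (lo_total_aux C C' u u' h)
  | .subR t x C, .subR t' y C', u, u', h => by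
    simp only [Ctx.plug, Term.sub.injEq] at h
    obtain ⟨rfl, rfl, h⟩ := h
    exact lo_tri (Ctx.subR t' y Ctx.hole) (lo_total_aux C C' u u' h)
  | .appL C t, .appR t' C', u, u', h => by
    simp only [Ctx.plug, Term.app.injEq] at h
    obtain ⟨h1, h2⟩ := h
    exact Or.inl (Or.inr (LtoR.app ⟨u, h1.symm⟩ ⟨u', h2⟩))
  | .appR t' C', .appL C t, u', u, h => by
    simp only [Ctx.plug, Term.app.injEq] at h
    obtain ⟨h1, h2⟩ := h
    exact Or.inr (Or.inl (Or.inr (LtoR.app ⟨u, h1⟩ ⟨u', h2.symm⟩)))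
  | .subL C x t, .subR t' y C', u, u', h => by
    simp only [Ctx.plug, Term.sub.injEq] at h
    obtain ⟨h1, rfl, h2⟩ := h
    exact Or.inl (Or.inr (LtoR.sub ⟨u, h1.symm⟩ ⟨u', h2⟩))
  | .subR t' y C', .subL C x t, u', u, h => by
    simp only [Ctx.plug, Term.sub.injEq] at h
    obtain ⟨h1, rfl, h2⟩ := h
    exact Or.inr (Or.inl (Or.inr (LtoR.sub ⟨u, h1⟩ ⟨u', h2.symm⟩)))
  | .lam _ _, .appL _ _, _, _, h => by simp [Ctx.plug] at h
  | .lam _ _, .appR _ _, _, _, h => by simp [Ctx.plug] at h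
  | .lam _ _, .subL _ _ _, _, _, h => by simp [Ctx.plug] at h
  | .lam _ _, .subR _ _ _, _, _, h => by simp [Ctx.plug] at h
  | .appL _ _, .lam _ _, _, _, h => by simp [Ctx.plug] at h
  | .appL _ _, .subL _ _ _, _, _, h => by simp [Ctx.plug] at h
  | .appL _ _, .subR _ _ _, _, _, h => by simp [Ctx.plug] at h
  | .appR _ _, .lam _ _, _, _, h => by simp [Ctx.plug] at h
  | .appR _ _, .subL _ _ _, _, _, h => by simp [Ctx.plug] at h
  | .appR _ _, .subR _ _ _, _, _, h => by simp [Ctx.plug] at h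
  | .subL _ _ _, .lam _ _, _, _, h => by simp [Ctx.plug] at h
  | .subL _ _ _, .appL _ _, _, _, h => by simp [Ctx.plug] at h
  | .subL _ _ _, .appR _ _, _, _, h => by simp [Ctx.plug] at h
  | .subR _ _ _, .lam _ _, _, _, h => by simp [Ctx.plug] at h
  | .subR _ _ _, .appL _ _, _, _, h => by simp [Ctx.plug] at h
  | .subR _ _ _, .appR _ _, _, _, h => by simp [Ctx.plug] at h

/-- Totality of the LO order: two prefixes of the same term are comparable. -/
theorem lo_order_total (C C' : Ctx) (t : Term)
    (h : CtxPrefix C t) (h' : CtxPrefix C' t) :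
    LOOrder C C' ∨ LOOrder C' C ∨ C = C' := by
  obtain ⟨u, rfl⟩ := h
  obtain ⟨u', hu'⟩ := h'
  exact lo_total_aux C C' u u' hu'
end

section
/- If ≡ is a strong bisimulation with respect to a deterministic reduction relation ⊸ (i.e., t ≡ u ⊸ w implies there exists r with t ⊸ r ≡ w, preserving the kind of step), then any sequence of steps mixing ⊸ and ≡ from t to u can be rearranged into a pure ⊸-derivation followed by a single ≡: t (⊸ ∪ ≡)* u implies t ⊸* ≡ u, with exactly the same number and kinds of ⊸-steps. -/
inductive Kind : Type
  | m | e
  deriving DecidableEq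

/-- Pure derivations of the labelled relation `R`, recording the list of kinds. -/
inductive Derives {α : Type} (R : Kind → α → α → Prop) : List Kind → α → α → Prop
  | nil (a : α) : Derives R [] a a
  | cons {k : Kind} {ks : List Kind} {a b c : α} :
      R k a b → Derives R ks b c → Derives R (k :: ks) a c

/-- Mixed sequences of `R`-steps and `E`-steps, recording the kinds of the
`R`-steps. -/
inductive Mixed {α : Type} (R : Kind → α → α → Prop) (E : α → α → Prop) :
    List Kind → α → α → Prop
  | nil (a : α) : Mixed R E [] a a
  | step {k : Kind} {ks : List Kind} {a b c : α} :
      R k a b → Mixed R E ks b c → Mixed R E (k :: ks) a c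
  | eq {ks : List Kind} {a b c : α} :
      E a b → Mixed R E ks b c → Mixed R E ks a c


theorem derives_bisim {α : Type} {R : Kind → α → α → Prop} {E : α → α → Prop}
    (hequiv : Equivalence E)
    (hbisim : ∀ (k : Kind) (a b c : α), E a b → R k b c → ∃ d, R k a d ∧ E d c)
    {ks : List Kind} {a b c : α} (hab : E a b) (hd : Derives R ks b c) :
    ∃ d, Derives R ks a d ∧ E d c := by
  induction hd generalizing a with
  | nil x => exact ⟨a, Derives.nil a, hab⟩
  | cons hr _ ih =>
    obtain ⟨d, hrd, hed⟩ := hbisim _ _ _ _ hab hr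
    obtain ⟨v, hdv, hev⟩ := ih hed
    exact ⟨v, Derives.cons hrd hdv, hev⟩

/-- Postponement of a strong bisimulation: a mixed sequence can be rearranged
into a pure derivation followed by a single `E`, with exactly the same number
and kinds of `R`-steps. -/
theorem postponement {α : Type} (R : Kind → α → α → Prop) (E : α → α → Prop)
    (hequiv : Equivalence E)
    (hdet : ∀ (k k' : Kind) (a b c : α), R k a b → R k' a c → k = k' ∧ b = c)
    (hbisim : ∀ (k : Kind) (a b c : α), E a b → R k b c → ∃ d, R k a d ∧ E d c)
    (ks : List Kind) (t u : α) (h : Mixed R E ks t u) :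
    ∃ v, Derives R ks t v ∧ E v u := by
  induction h with
  | nil a => exact ⟨a, Derives.nil a, hequiv.refl a⟩
  | step hr _ ih =>
    obtain ⟨v, hdv, hev⟩ := ih
    exact ⟨v, Derives.cons hr hdv, hev⟩
  | eq he _ ih =>
    obtain ⟨v, hdv, hev⟩ := ih
    obtain ⟨d, hdd, hed⟩ := derives_bisim hequiv hbisim he hdv
    exact ⟨d, hdd, hequiv.trans hed hev⟩
end

section
/- In a reflective distillery, every machine execution ρ : s →* s' projects to a derivation d : ⟦s⟧ ⊸* ≡ ⟦s'⟧ in the calculus with the same number of multiplicative steps and the same number of exponential steps; conversely, every derivation d : ⟦s⟧ ⊸* t lifts to an execution ρ : s →* s' with t ≡ ⟦s'⟧ and the same number of multiplicative and exponential steps. -/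
inductive MLabel : Type
  | m | e | c
  deriving DecidableEq

/-- Reachable states of the machine. -/
inductive Reach {σ : Type} (Tr : MLabel → σ → σ → Prop) (Init : σ → Prop) : σ → Prop
  | init {s : σ} : Init s → Reach Tr Init s
  | step {s s' : σ} {l : MLabel} : Reach Tr Init s → Tr l s s' → Reach Tr Init s'

/-- Labelled machine executions. -/
inductive Exec {σ : Type} (Tr : MLabel → σ → σ → Prop) : List MLabel → σ → σ → Prop
  | nil (s : σ) : Exec Tr [] s s
  | cons {l : MLabel} {ls : List MLabel} {s s' s'' : σ} :
      Tr l s s' → Exec Tr ls s' s'' → Exec Tr (l :: ls) s s''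

/-- Labelled derivations of the strategy. -/
inductive Deriv {τ : Type} (Red : Kind → τ → τ → Prop) : List Kind → τ → τ → Prop
  | nil (t : τ) : Deriv Red [] t t
  | cons {k : Kind} {ks : List Kind} {t u w : τ} :
      Red k t u → Deriv Red ks u w → Deriv Red (k :: ks) t w

/-- The machine label corresponding to a kind of principal step. -/
def klabel : Kind → MLabel
  | .m => .m
  | .e => .e

/-- Structural equivalence (a strong bisimulation) lifts along derivations. -/
theorem derivBisim {τ : Type} {Red : Kind → τ → τ → Prop} {SEq : τ → τ → Prop}
    (eqBisim : ∀ (k : Kind) (t u w : τ), SEq t u → Red k u w →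
        ∃ r, Red k t r ∧ SEq r w) :
    ∀ {ks : List Kind} {u w t : τ}, Deriv Red ks u w → SEq t u →
      ∃ r, Deriv Red ks t r ∧ SEq r w := by
  intro ks u w t hd
  induction hd generalizing t with
  | nil v => exact fun h => ⟨t, .nil t, h⟩
  | cons hr hd ih =>
    intro h
    obtain ⟨r₁, hr₁, he₁⟩ := eqBisim _ _ _ _ h hr
    obtain ⟨r, hdr, her⟩ := ih he₁
    exact ⟨r, .cons hr₁ hdr, her⟩

theorem execAppend {σ : Type} {Tr : MLabel → σ → σ → Prop}
    {ls ls' : List MLabel} {s s' s'' : σ}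
    (h : Exec Tr ls s s') (h' : Exec Tr ls' s' s'') : Exec Tr (ls ++ ls') s s'' := by
  induction h with
  | nil => exact h'
  | cons htr _ ih => exact .cons htr (ih h')

theorem reachExec {σ : Type} {Tr : MLabel → σ → σ → Prop} {Init : σ → Prop}
    {ls : List MLabel} {s s' : σ}
    (hr : Reach Tr Init s) (h : Exec Tr ls s s') : Reach Tr Init s' := by
  induction h with
  | nil => exact hr
  | cons htr h ih => exact ih (hr.step htr)

/-- Correctness and completeness of a reflective distillery: executions project
to derivations with the same numbers of multiplicative and exponential steps,
and conversely derivations lift to executions. -/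
theorem distillery_correctness_completeness {σ τ : Type}
    (Tr : MLabel → σ → σ → Prop) (Init : σ → Prop)
    (Red : Kind → τ → τ → Prop) (SEq : τ → τ → Prop) (decode : σ → τ)
    (trDet : ∀ (l l' : MLabel) (s a b : σ), Tr l s a → Tr l' s b → l = l' ∧ a = b)
    (redDet : ∀ (k k' : Kind) (t a b : τ), Red k t a → Red k' t b → k = k' ∧ a = b)
    (eqEquiv : Equivalence SEq)
    (eqBisim : ∀ (k : Kind) (t u w : τ), SEq t u → Red k u w →
        ∃ r, Red k t r ∧ SEq r w)
    (projM : ∀ s s', Reach Tr Init s → Tr .m s s' →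
        ∃ u, Red .m (decode s) u ∧ SEq u (decode s'))
    (projE : ∀ s s', Reach Tr Init s → Tr .e s s' →
        ∃ u, Red .e (decode s) u ∧ SEq u (decode s'))
    (projC : ∀ s s', Reach Tr Init s → Tr .c s s' → SEq (decode s) (decode s'))
    (commTerm : ∀ s, Reach Tr Init s → Acc (fun a b => Tr .c b a) s)
    (progress : ∀ s, Reach Tr Init s → (∀ l s', ¬ Tr l s s') →
        ∀ k u, ¬ Red k (decode s) u)
    (s0 : σ) (hInit : Init s0) :
    (∀ (ls : List MLabel) (s' : σ), Exec Tr ls s0 s' →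
        ∃ (ks : List Kind) (t : τ), Deriv Red ks (decode s0) t ∧ SEq t (decode s') ∧
          ks.count .m = ls.count .m ∧ ks.count .e = ls.count .e) ∧
    (∀ (ks : List Kind) (t : τ), Deriv Red ks (decode s0) t →
        ∃ (ls : List MLabel) (s' : σ), Exec Tr ls s0 s' ∧ SEq t (decode s') ∧
          ks.count .m = ls.count .m ∧ ks.count .e = ls.count .e) := by
  constructor
  · -- correctness: executions project to derivations
    have key : ∀ (ls : List MLabel) (s s' : σ), Reach Tr Init s → Exec Tr ls s s' →
        ∃ (ks : List Kind) (t : τ), Deriv Red ks (decode s) t ∧ SEq t (decode s') ∧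
          ks.count .m = ls.count .m ∧ ks.count .e = ls.count .e := by
      intro ls s s' hr hex
      induction hex with
      | nil s => exact ⟨[], decode s, .nil _, eqEquiv.refl _, rfl, rfl⟩
      | @cons l ls s s' s'' htr hex ih =>
        obtain ⟨ks, t, hd, heq, hm, he⟩ := ih (hr.step htr)
        cases l with
        | c =>
          obtain ⟨r, hdr, her⟩ := derivBisim eqBisim hd (projC _ _ hr htr)
          exact ⟨ks, r, hdr, eqEquiv.trans her heq, by simpa using hm,
            by simpa using he⟩
        | m =>
          obtain ⟨u, hred, hu⟩ := projM _ _ hr htr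
          obtain ⟨r, hdr, her⟩ := derivBisim eqBisim hd hu
          exact ⟨.m :: ks, r, .cons hred hdr, eqEquiv.trans her heq,
            by simpa using hm, by simpa using he⟩
        | e =>
          obtain ⟨u, hred, hu⟩ := projE _ _ hr htr
          obtain ⟨r, hdr, her⟩ := derivBisim eqBisim hd hu
          exact ⟨.e :: ks, r, .cons hred hdr, eqEquiv.trans her heq,
            by simpa using hm, by simpa using he⟩
    exact fun ls s' hex => key ls s0 s' (.init hInit) hex
  · -- completeness: derivations lift to executions
    -- one principal step lifts, after finitely many commutative steps
    have lift1 : ∀ s, Acc (fun a b => Tr .c b a) s → Reach Tr Init s →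
        ∀ (k : Kind) (u : τ), Red k (decode s) u →
        ∃ (n : ℕ) (s'' : σ), Exec Tr (List.replicate n .c ++ [klabel k]) s s'' ∧
          SEq u (decode s'') := by
      intro s hacc
      induction hacc with
      | intro s _ ih =>
        intro hr k u hred
        have hstep : ∃ l s', Tr l s s' := by
          by_contra h
          push_neg at h
          exact progress s hr h k u hred
        obtain ⟨l, s', htr⟩ := hstep
        cases l with
        | c =>
          obtain ⟨r, hr', he⟩ :=
            eqBisim k _ _ _ (eqEquiv.symm (projC _ _ hr htr)) hred
          obtain ⟨n, s'', hex, heq⟩ := ih s' htr (hr.step htr) k r hr'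
          exact ⟨n + 1, s'', by simpa [List.replicate_succ] using Exec.cons htr hex,
            eqEquiv.trans (eqEquiv.symm he) heq⟩
        | m =>
          obtain ⟨v, hredv, hv⟩ := projM _ _ hr htr
          obtain ⟨hk, huv⟩ := redDet k .m _ _ _ hred hredv
          subst hk; subst huv
          exact ⟨0, s', by simpa [klabel] using Exec.cons htr (Exec.nil s'), hv⟩
        | e =>
          obtain ⟨v, hredv, hv⟩ := projE _ _ hr htr
          obtain ⟨hk, huv⟩ := redDet k .e _ _ _ hred hredv
          subst hk; subst huv
          exact ⟨0, s', by simpa [klabel] using Exec.cons htr (Exec.nil s'), hv⟩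
    have key : ∀ (ks : List Kind) (t0 t : τ), Deriv Red ks t0 t →
        ∀ s, Reach Tr Init s → SEq t0 (decode s) →
        ∃ (ls : List MLabel) (s' : σ), Exec Tr ls s s' ∧ SEq t (decode s') ∧
          ks.count .m = ls.count .m ∧ ks.count .e = ls.count .e := by
      intro ks t0 t hd
      induction hd with
      | nil t => exact fun s hr he => ⟨[], s, .nil s, he, rfl, rfl⟩
      | @cons k ks t0 u t hred hd ih =>
        intro s hr he
        obtain ⟨r, hredr, her⟩ := eqBisim k _ _ _ (eqEquiv.symm he) hred
        obtain ⟨n, s'', hex, heq⟩ := lift1 s (commTerm s hr) hr k r hredr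
        have hr'' : Reach Tr Init s'' := reachExec hr hex
        have hu : SEq u (decode s'') :=
          eqEquiv.trans (eqEquiv.symm her) heq
        obtain ⟨ls, s', hex', heq', hm, hee⟩ := ih s'' hr'' hu
        refine ⟨(List.replicate n .c ++ [klabel k]) ++ ls, s',
          execAppend hex hex', heq', ?_, ?_⟩ <;>
          cases k <;>
          simp [klabel, List.count_append, List.count_replicate, List.count_cons,
            List.count_nil, hm, hee]
    intro ks t hd
    obtain ⟨ls, s', hex, heq, hm, he⟩ :=
      key ks (decode s0) t hd s0 (.init hInit) (eqEquiv.refl _)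
    exact ⟨ls, s', hex, heq, hm, he⟩
end

section
/- For a bilinear reflective distillery, any derivation d : t ⊸* u of the strategy can be implemented on a RAM machine in time O((1+|d|)·|t|), i.e., bilinear in the size of the initial term and the length of the derivation. -/

lemma exec_append {σ : Type} {Tr : MLabel → σ → σ → Prop} :
    ∀ {ls ls' : List MLabel} {s s' s'' : σ},
      Exec Tr ls s s' → Exec Tr ls' s' s'' → Exec Tr (ls ++ ls') s s'' := by
  intro ls ls' s s' s'' h1 h2
  induction h1 with
  | nil => simpa using h2
  | cons h _ ih => exact Exec.cons h (ih h2)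

lemma reach_of_exec {σ : Type} {Tr : MLabel → σ → σ → Prop} {Init : σ → Prop} :
    ∀ {ls : List MLabel} {s s' : σ},
      Exec Tr ls s s' → Reach Tr Init s → Reach Tr Init s' := by
  intro ls s s' h
  induction h with
  | nil => exact fun h => h
  | cons h _ ih => exact fun hr => ih (Reach.step hr h)

/-- Low-level implementation theorem: for a bilinear reflective distillery,
every derivation of the strategy can be implemented (lifted to an execution
whose total cost is) in time O((1+|d|)·|t|), bilinear in the size of the
initial term and the length of the derivation. -/
theorem low_level_implementation {σ τ : Type}
    (Tr : MLabel → σ → σ → Prop) (Init : σ → Prop)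
    (Red : Kind → τ → τ → Prop) (SEq : τ → τ → Prop) (decode : σ → τ)
    (size : τ → ℕ) (cost : MLabel → ℕ)
    (trDet : ∀ (l l' : MLabel) (s a b : σ), Tr l s a → Tr l' s b → l = l' ∧ a = b)
    (redDet : ∀ (k k' : Kind) (t a b : τ), Red k t a → Red k' t b → k = k' ∧ a = b)
    (eqEquiv : Equivalence SEq)
    (eqBisim : ∀ (k : Kind) (t u w : τ), SEq t u → Red k u w →
        ∃ r, Red k t r ∧ SEq r w)
    (projM : ∀ s s', Reach Tr Init s → Tr .m s s' →
        ∃ u, Red .m (decode s) u ∧ SEq u (decode s'))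
    (projE : ∀ s s', Reach Tr Init s → Tr .e s s' →
        ∃ u, Red .e (decode s) u ∧ SEq u (decode s'))
    (projC : ∀ s s', Reach Tr Init s → Tr .c s s' → SEq (decode s) (decode s'))
    (commTerm : ∀ s, Reach Tr Init s → Acc (fun a b => Tr .c b a) s)
    (progress : ∀ s, Reach Tr Init s → (∀ l s', ¬ Tr l s s') →
        ∀ k u, ¬ Red k (decode s) u)
    (s0 : σ) (hInit : Init s0)
    -- each commutative transition takes constant time `a`
    (a : ℕ) (costC : cost .c ≤ a)
    -- each principal transition takes time linear in the size of the initial term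
    (b : ℕ) (costM : cost .m ≤ b * size (decode s0))
    (costE : cost .e ≤ b * size (decode s0))
    -- bilinearity: commutative steps are bilinear in the principal steps and
    -- the size of the initial term
    (c0 : ℕ) (hc0 : 0 < c0)
    (bilinear : ∀ (ls : List MLabel) (s' : σ), Exec Tr ls s0 s' →
        ls.count .c ≤ c0 * (1 + (ls.count .m + ls.count .e)) * size (decode s0)) :
    ∃ K : ℕ, ∀ (ks : List Kind) (t : τ), Deriv Red ks (decode s0) t →
      ∃ (ls : List MLabel) (s' : σ), Exec Tr ls s0 s' ∧ SEq t (decode s') ∧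
        (ls.map cost).sum ≤ K * (1 + ks.length) * size (decode s0) := by
  classical
  set N := size (decode s0) with hN
  have costSum : ∀ ls : List MLabel,
      (ls.map cost).sum ≤ a * ls.count MLabel.c
        + (b * N) * (ls.count MLabel.m + ls.count MLabel.e) := by
    intro ls
    induction ls with
    | nil => simp
    | cons l ls ih =>
      cases l <;> simp only [List.map_cons, List.sum_cons, List.count_cons] <;>
        simp <;> nlinarith [ih, costC, costM, costE]
  have sim1 : ∀ s, Acc (fun x y => Tr MLabel.c y x) s → Reach Tr Init s →
      ∀ k r, Red k (decode s) r →
      ∃ ls s', Exec Tr ls s s' ∧ SEq r (decode s') ∧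
        ls.count MLabel.m + ls.count MLabel.e = 1 := by
    intro s hacc
    induction hacc with
    | intro s _ ih =>
      intro hs k r hred
      by_cases hstop : ∀ l s', ¬ Tr l s s'
      · exact absurd hred (progress s hs hstop k r)
      · push_neg at hstop
        obtain ⟨l, s', htr⟩ := hstop
        cases l with
        | m =>
          obtain ⟨u, hru, hsequ⟩ := projM s s' hs htr
          obtain ⟨hk, hru'⟩ := redDet k Kind.m (decode s) r u hred hru
          exact ⟨[MLabel.m], s', Exec.cons htr (Exec.nil s'), hru' ▸ hsequ, by simp⟩
        | e =>
          obtain ⟨u, hru, hsequ⟩ := projE s s' hs htr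
          obtain ⟨hk, hru'⟩ := redDet k Kind.e (decode s) r u hred hru
          exact ⟨[MLabel.e], s', Exec.cons htr (Exec.nil s'), hru' ▸ hsequ, by simp⟩
        | c =>
          have hs' : Reach Tr Init s' := Reach.step hs htr
          have hseq := projC s s' hs htr
          obtain ⟨r', hred', hseq'⟩ :=
            eqBisim k (decode s') (decode s) r (eqEquiv.symm hseq) hred
          obtain ⟨ls, s'', hex, hseq'', hcount⟩ := ih s' htr hs' k r' hred'
          refine ⟨MLabel.c :: ls, s'', Exec.cons htr hex, ?_, by simpa using hcount⟩
          exact eqEquiv.trans (eqEquiv.symm hseq') hseq''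
  have simD : ∀ ks (t w : τ), Deriv Red ks t w → ∀ s, Reach Tr Init s →
      SEq t (decode s) →
      ∃ ls s', Exec Tr ls s s' ∧ SEq w (decode s') ∧
        ls.count MLabel.m + ls.count MLabel.e = ks.length := by
    intro ks t w hd
    induction hd with
    | nil t => exact fun s hs hseq => ⟨[], s, Exec.nil s, hseq, by simp⟩
    | cons hred hds ih =>
      intro s hs hseq
      obtain ⟨r, hredr, hseqr⟩ :=
        eqBisim _ (decode s) _ _ (eqEquiv.symm hseq) hred
      obtain ⟨ls1, s1, hex1, hseq1, hcnt1⟩ :=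
        sim1 s (commTerm s hs) hs _ r hredr
      have hs1 : Reach Tr Init s1 := reach_of_exec hex1 hs
      obtain ⟨ls2, s2, hex2, hseq2, hcnt2⟩ :=
        ih s1 hs1 (eqEquiv.trans (eqEquiv.symm hseqr) hseq1)
      refine ⟨ls1 ++ ls2, s2, exec_append hex1 hex2, hseq2, ?_⟩
      simp only [List.count_append, List.length_cons]
      omega
  refine ⟨a * c0 + b, ?_⟩
  intro ks t hd
  obtain ⟨ls, s', hex, hseqt, hcnt⟩ :=
    simD ks (decode s0) t hd s0 (Reach.init hInit) (eqEquiv.refl _)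
  refine ⟨ls, s', hex, hseqt, ?_⟩
  have hc := bilinear ls s' hex
  have hcost := costSum ls
  rw [hcnt] at hc hcost
  set n := ks.length
  calc (ls.map cost).sum ≤ a * ls.count MLabel.c + b * N * n := hcost
    _ ≤ a * (c0 * (1 + n) * N) + b * N * n := by
        exact Nat.add_le_add_right (Nat.mul_le_mul_left a hc) _
    _ ≤ (a * c0 + b) * (1 + n) * N := by nlinarith
end

section
/- Every compatible pair of a frame and an environment factorizes: if F ∝ E then F = F_w : F_t and E = E_w : E_t, where F_w is a weak frame, F_t a trunk frame, E_w a weak environment, E_t a trunk environment, and F_t begins with variable entry x if and only if E_t begins with scope opener ⧫x. -/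
/-- Codes: pure λ-terms (no explicit substitutions). -/
inductive Code : Type
  | var : ℕ → Code
  | lam : ℕ → Code → Code
  | app : Code → Code → Code
  deriving DecidableEq

namespace Code
def fv : Code → Finset ℕ
  | var x => {x}
  | lam x t => t.fv.erase x
  | app t u => t.fv ∪ u.fv

def bv : Code → Finset ℕ
  | var _ => ∅
  | lam x t => insert x t.bv
  | app t u => t.bv ∪ u.bv

def vars (t : Code) : Finset ℕ := t.fv ∪ t.bv

def size : Code → ℕ
  | var _ => 1
  | lam _ t => 1 + t.size
  | app t u => 1 + t.size + u.size
end Code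

abbrev Stack := List Code

inductive FrameEntry : Type
  | pair : Code → Stack → FrameEntry
  | var : ℕ → FrameEntry
  deriving DecidableEq

abbrev Frame := List FrameEntry

inductive EnvEntry : Type
  | esub : ℕ → Code → EnvEntry   -- [x←t]
  | opn : ℕ → EnvEntry           -- ⧫x  (scope opener)
  | cls : ℕ → EnvEntry           -- ⧪x  (scope closer)
  deriving DecidableEq

abbrev Env := List EnvEntry

/-- Weak environments: `E_w ::= ε | [x←t]:E_w | ⧪x:E_w:⧫x:E_w'`. -/
inductive IsWeakEnv : Env → Prop
  | nil : IsWeakEnv []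
  | esub {E : Env} (x : ℕ) (t : Code) : IsWeakEnv E → IsWeakEnv (.esub x t :: E)
  | scope {Ew E : Env} (x : ℕ) : IsWeakEnv Ew → IsWeakEnv E →
      IsWeakEnv (.cls x :: (Ew ++ .opn x :: E))

/-- Result of looking up a variable in an environment. -/
inductive Res : Type
  | bot
  | code : Code → Res
  | opn
  deriving DecidableEq

/-- Environment lookup `E(x)`, skipping closed scope segments `⧪y:E_w:⧫y`. -/
inductive LookupR : Env → ℕ → Res → Prop
  | nil (x : ℕ) : LookupR [] x .bot
  | subEq {E : Env} (x : ℕ) (t : Code) : LookupR (.esub x t :: E) x (.code t)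
  | subNe {E : Env} {x y : ℕ} {r : Res} (t : Code) :
      x ≠ y → LookupR E x r → LookupR (.esub y t :: E) x r
  | opnEq {E : Env} (x : ℕ) : LookupR (.opn x :: E) x .opn
  | opnNe {E : Env} {x y : ℕ} {r : Res} :
      x ≠ y → LookupR E x r → LookupR (.opn y :: E) x r
  | cls {Ew E : Env} {x : ℕ} {r : Res} (y : ℕ) :
      IsWeakEnv Ew → LookupR E x r → LookupR (.cls y :: (Ew ++ .opn y :: E)) x r

/-- `Λ(E)`: variables bound to an open scope by `E`. -/
def LamE (E : Env) : Set ℕ := {x | LookupR E x .opn}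

/-- `Λ(F)`: variable entries of a frame. -/
def LamF (F : Frame) : Set ℕ := {x | FrameEntry.var x ∈ F}

/-- Weak frames: no variable entries. -/
def IsWeakFrame (F : Frame) : Prop := ∀ x : ℕ, FrameEntry.var x ∉ F

/-- Trunk frames: empty or starting with a variable entry. -/
def IsTrunkFrame (F : Frame) : Prop :=
  F = [] ∨ ∃ (x : ℕ) (F' : Frame), F = .var x :: F'

/-- Trunk environments: `E_t ::= ε | ⧫x:E`. -/
def IsTrunkEnv (E : Env) : Prop :=
  E = [] ∨ ∃ (x : ℕ) (E' : Env), E = .opn x :: E'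

/-- Compatibility between frames and environments. -/
inductive Compat : Frame → Env → Prop
  | nil : Compat [] []
  | weak {F : Frame} {E : Env} {Fw : Frame} {Ew : Env} :
      IsWeakFrame Fw → IsWeakEnv Ew → Compat F E → Compat (Fw ++ F) (Ew ++ E)
  | abs {F : Frame} {E : Env} (x : ℕ) :
      Compat F E → Compat (.var x :: F) (.opn x :: E)

lemma IsWeakEnv.append {E1 E2 : Env} (h1 : IsWeakEnv E1) (h2 : IsWeakEnv E2) :
    IsWeakEnv (E1 ++ E2) := by
  induction h1 with
  | nil => simpa
  | esub x t _ ih => exact .esub x t ih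
  | scope x hw _ ihw ihE =>
      rw [List.cons_append, List.append_assoc, List.cons_append]
      exact .scope x hw ihE

lemma IsWeakFrame.append {F1 F2 : Frame} (h1 : IsWeakFrame F1) (h2 : IsWeakFrame F2) :
    IsWeakFrame (F1 ++ F2) := by
  intro x hx
  rcases List.mem_append.1 hx with h | h
  · exact h1 x h
  · exact h2 x h

/-- Factorization of compatible pairs into weak and trunk parts, with matching
first variable entry / scope opener. -/
theorem compat_factorization (F : Frame) (E : Env) (h : Compat F E) :
    ∃ (Fw Ft : Frame) (Ew Et : Env),
      F = Fw ++ Ft ∧ E = Ew ++ Et ∧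
      IsWeakFrame Fw ∧ IsTrunkFrame Ft ∧ IsWeakEnv Ew ∧ IsTrunkEnv Et ∧
      ∀ x : ℕ, (∃ F', Ft = FrameEntry.var x :: F') ↔
               (∃ E', Et = EnvEntry.opn x :: E') := by
  induction h with
  | nil =>
      exact ⟨[], [], [], [], rfl, rfl, by intro x h; simp at h, Or.inl rfl, .nil, Or.inl rfl,
        by intro x; constructor <;> rintro ⟨_, h⟩ <;> simp at h⟩
  | weak hFw hEw _ ih =>
      obtain ⟨Fw, Ft, Ew, Et, hF, hE, hwF, htF, hwE, htE, hiff⟩ := ih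
      exact ⟨_ ++ Fw, Ft, _ ++ Ew, Et, by rw [hF, List.append_assoc],
        by rw [hE, List.append_assoc], hFw.append hwF, htF, hEw.append hwE, htE, hiff⟩
  | abs x _ _ =>
      refine ⟨[], _, [], _, rfl, rfl, by intro x h; simp at h,
        Or.inr ⟨x, _, rfl⟩, .nil, Or.inr ⟨x, _, rfl⟩, ?_⟩
      intro y
      constructor <;> rintro ⟨_, h⟩ <;> injection h with h' _ <;>
        injection h' with h'' <;> exact ⟨_, by rw [h'']⟩
end

section
/- If F ∝ E is a compatible pair, F_w a weak frame, and E_w a weak environment, then the decodings ⟦F_w⟧, ⟦E_w⟧, and ⟦F, E⟧ are non-applicative contexts, i.e., not of the form C⟨L ⟨·⟩ t⟩ where the hole is in left position of an application (under a substitution context L). -/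
def Code.toTerm : Code → Term
  | .var x => .var x
  | .lam x t => .lam x t.toTerm
  | .app t u => .app t.toTerm u.toTerm

/-- Decoding of stacks to contexts: `⟦u:π⟧ = ⟦π⟧⟨⟨·⟩ u⟩`. -/
def decodeStack : Stack → Ctx
  | [] => .hole
  | u :: π => (decodeStack π).comp (.appL .hole u.toTerm)

/-- Decoding of weak environments to contexts. -/
inductive DecodeWEnv : Env → Ctx → Prop
  | nil : DecodeWEnv [] .hole
  | esub {E : Env} {C : Ctx} (x : ℕ) (u : Code) :
      DecodeWEnv E C → DecodeWEnv (.esub x u :: E) (C.comp (.subL .hole x u.toTerm))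
  | cls {Ew E : Env} {C : Ctx} (x : ℕ) :
      IsWeakEnv Ew → DecodeWEnv E C →
      DecodeWEnv (.cls x :: (Ew ++ .opn x :: E)) C

/-- Decoding of weak frames to contexts: `⟦(u,π):F⟧ = ⟦F⟧⟨⟦π⟧⟨u ⟨·⟩⟩⟩`. -/
inductive DecodeWFrame : Frame → Ctx → Prop
  | nil : DecodeWFrame [] .hole
  | pair {F : Frame} {C : Ctx} (u : Code) (π : Stack) :
      DecodeWFrame F C →
      DecodeWFrame (.pair u π :: F)
        (C.comp ((decodeStack π).comp (.appR u.toTerm .hole)))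

/-- Decoding of compatible pairs to contexts. -/
inductive DecodePair : Frame → Env → Ctx → Prop
  | nil : DecodePair [] [] .hole
  | weak {F : Frame} {E : Env} {Fw : Frame} {Ew : Env} {C Ce Cf : Ctx} :
      IsWeakFrame Fw → IsWeakEnv Ew → DecodePair F E C →
      DecodeWEnv Ew Ce → DecodeWFrame Fw Cf →
      DecodePair (Fw ++ F) (Ew ++ E) (C.comp (Ce.comp Cf))
  | abs {F : Frame} {E : Env} {C : Ctx} (x : ℕ) :
      DecodePair F E C → DecodePair (.var x :: F) (.opn x :: E) (C.comp (.lam x .hole))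

/-- ApplicativeCtx contexts: the hole is in left position of an application,
possibly under a substitution context. -/
def ApplicativeCtx (C : Ctx) : Prop :=
  ∃ (C' L : Ctx) (t : Term), IsSubCtx L ∧ C = C'.comp (.appL L t)

/-- Recursive characterization of applicativity. -/
def isAppC : Ctx → Prop
  | .hole => False
  | .lam _ C => isAppC C
  | .appL C _ => IsSubCtx C ∨ isAppC C
  | .appR _ C => isAppC C
  | .subL C _ _ => isAppC C
  | .subR _ _ C => isAppC C

lemma isSub_comp_iff {C D : Ctx} : IsSubCtx (C.comp D) ↔ IsSubCtx C ∧ IsSubCtx D := by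
  induction C with
  | hole => exact ⟨fun h => ⟨IsSubCtx.hole, h⟩, fun h => h.2⟩
  | lam x C ih => constructor <;> intro h
                  · cases h
                  · rcases h with ⟨h, _⟩; cases h
  | appL C t ih => constructor <;> intro h
                   · cases h
                   · rcases h with ⟨h, _⟩; cases h
  | appR t C ih => constructor <;> intro h
                   · cases h
                   · rcases h with ⟨h, _⟩; cases h
  | subL C x t ih =>
      constructor <;> intro h
      · cases h with | sub h' => exact ⟨IsSubCtx.sub (ih.mp h').1, (ih.mp h').2⟩
      · rcases h with ⟨h1, h2⟩
        cases h1 with | sub h' => exact IsSubCtx.sub (ih.mpr ⟨h', h2⟩)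
  | subR t x C ih => constructor <;> intro h
                     · cases h
                     · rcases h with ⟨h, _⟩; cases h

lemma isAppC_comp {C D : Ctx} : isAppC (C.comp D) ↔ isAppC D ∨ (IsSubCtx D ∧ isAppC C) := by
  induction C with
  | hole => simp [Ctx.comp, isAppC]
  | lam x C ih => simp only [Ctx.comp, isAppC]; exact ih
  | appL C t ih =>
      simp only [Ctx.comp, isAppC, isSub_comp_iff]
      rw [ih]; tauto
  | appR t C ih => simp only [Ctx.comp, isAppC]; exact ih
  | subL C x t ih => simp only [Ctx.comp, isAppC]; exact ih
  | subR t x C ih => simp only [Ctx.comp, isAppC]; exact ih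

lemma applicative_iff_isAppC {C : Ctx} : ApplicativeCtx C ↔ isAppC C := by
  constructor
  · rintro ⟨C', L, t, hL, rfl⟩
    rw [isAppC_comp]
    exact Or.inl (Or.inl hL)
  · intro h
    induction C with
    | hole => cases h
    | lam x C ih =>
        rcases ih h with ⟨C', L, t, hL, rfl⟩
        exact ⟨.lam x C', L, t, hL, rfl⟩
    | appL C u ih =>
        rcases h with h | h
        · exact ⟨.hole, C, u, h, rfl⟩
        · rcases ih h with ⟨C', L, t, hL, rfl⟩
          exact ⟨.appL C' u, L, t, hL, rfl⟩
    | appR u C ih =>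
        rcases ih h with ⟨C', L, t, hL, rfl⟩
        exact ⟨.appR u C', L, t, hL, rfl⟩
    | subL C x u ih =>
        rcases ih h with ⟨C', L, t, hL, rfl⟩
        exact ⟨.subL C' x u, L, t, hL, rfl⟩
    | subR u x C ih =>
        rcases ih h with ⟨C', L, t, hL, rfl⟩
        exact ⟨.subR u x C', L, t, hL, rfl⟩

lemma notAppC_wframe {F : Frame} {C : Ctx} (h : DecodeWFrame F C) : ¬ isAppC C := by
  induction h with
  | nil => simp [isAppC]
  | pair u π h ih =>
      rw [isAppC_comp, isAppC_comp, isSub_comp_iff]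
      rintro ((h1 | ⟨h2, _⟩) | ⟨⟨_, h2⟩, _⟩)
      · exact h1
      · cases h2
      · cases h2

lemma notAppC_wenv {E : Env} {C : Ctx} (h : DecodeWEnv E C) : ¬ isAppC C := by
  induction h with
  | nil => simp [isAppC]
  | esub x u h ih =>
      rw [isAppC_comp]
      rintro (h1 | ⟨_, h2⟩)
      · simp [isAppC] at h1
      · exact ih h2
  | cls x hw h ih => exact ih

lemma notAppC_pair {F : Frame} {E : Env} {C : Ctx} (h : DecodePair F E C) : ¬ isAppC C := by
  induction h with
  | nil => simp [isAppC]
  | weak hwF hwE hp hce hcf ih =>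
      rw [isAppC_comp, isAppC_comp]
      rintro ((h1 | ⟨_, h2⟩) | ⟨_, h3⟩)
      · exact notAppC_wframe hcf h1
      · exact notAppC_wenv hce h2
      · exact ih h3
  | abs x hp ih =>
      rw [isAppC_comp]
      rintro (h1 | ⟨h2, _⟩)
      · simp [isAppC] at h1
      · cases h2

/-- Decodings of weak frames, weak environments, and compatible pairs are
non-applicative contexts. -/
theorem decodings_not_applicative :
    (∀ (Fw : Frame) (C : Ctx), IsWeakFrame Fw → DecodeWFrame Fw C →
        ¬ ApplicativeCtx C) ∧
    (∀ (Ew : Env) (C : Ctx), IsWeakEnv Ew → DecodeWEnv Ew C →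
        ¬ ApplicativeCtx C) ∧
    (∀ (F : Frame) (E : Env) (C : Ctx), Compat F E → DecodePair F E C →
        ¬ ApplicativeCtx C) := by
  refine ⟨fun Fw C _ h => ?_, fun Ew C _ h => ?_, fun F E C _ h => ?_⟩ <;>
    rw [applicative_iff_isAppC]
  · exact notAppC_wframe h
  · exact notAppC_wenv h
  · exact notAppC_pair h
end

section
/- Subterm property for linear LO reduction: in any →LO derivation from an initial term t (a pure λ-term without explicit substitutions), every subterm duplicated by an exponential step →e is a subterm of t (up to renaming of variables). -/
/-- Pure terms: λ-terms without explicit substitutions. -/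
def Term.isPure : Term → Prop
  | .var _ => True
  | .lam _ t => t.isPure
  | .app t u => t.isPure ∧ u.isPure
  | .sub _ _ _ => False

/-- Skeleton of a term: all variables erased. -/
inductive TSkel : Type
  | var : TSkel
  | lam : TSkel → TSkel
  | app : TSkel → TSkel → TSkel
  | sub : TSkel → TSkel → TSkel
  deriving DecidableEq

def Term.skel : Term → TSkel
  | .var _ => .var
  | .lam _ t => .lam t.skel
  | .app t u => .app t.skel u.skel
  | .sub t _ u => .sub t.skel u.skel

inductive IsSubTSkel : TSkel → TSkel → Prop
  | refl (s : TSkel) : IsSubTSkel s s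
  | lam {s t : TSkel} : IsSubTSkel s t → IsSubTSkel s (.lam t)
  | appL {s t u : TSkel} : IsSubTSkel s t → IsSubTSkel s (.app t u)
  | appR {s t u : TSkel} : IsSubTSkel s u → IsSubTSkel s (.app t u)
  | subL {s t u : TSkel} : IsSubTSkel s t → IsSubTSkel s (.sub t u)
  | subR {s t u : TSkel} : IsSubTSkel s u → IsSubTSkel s (.sub t u)

/-- Leftmost-outermost step. -/
def LOStep (t u : Term) : Prop := ∃ C, StepAt C t u ∧ IsLOPos t C


/- ===== auxiliary development ===== -/

open Ctx (plug comp binders)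

lemma plug_comp (C D : Ctx) (u : Term) : (C.comp D).plug u = C.plug (D.plug u) := by
  induction C <;> simp [Ctx.comp, Ctx.plug, *]

lemma comp_assoc (A B C : Ctx) : (A.comp B).comp C = A.comp (B.comp C) := by
  induction A <;> simp [Ctx.comp, *]

lemma comp_eq_hole {A B : Ctx} (h : A.comp B = .hole) : A = .hole ∧ B = .hole := by
  cases A <;> simp_all [Ctx.comp]

lemma binders_comp (A B : Ctx) : (A.comp B).binders = A.binders ∪ B.binders := by
  induction A <;> simp [Ctx.comp, Ctx.binders, *, Finset.insert_union]

/-- direction labels of the path to the hole -/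
def Ctx.dirs : Ctx → List ℕ
  | .hole => []
  | .lam _ C => 0 :: C.dirs
  | .appL C _ => 0 :: C.dirs
  | .appR _ C => 1 :: C.dirs
  | .subL C _ _ => 0 :: C.dirs
  | .subR _ _ C => 1 :: C.dirs

lemma dirs_comp (A B : Ctx) : (A.comp B).dirs = A.dirs ++ B.dirs := by
  induction A <;> simp [Ctx.comp, Ctx.dirs, *]

lemma dirs_eq_nil {C : Ctx} (h : C.dirs = []) : C = .hole := by
  cases C <;> simp_all [Ctx.dirs]

abbrev LexN := List.Lex (· < · : ℕ → ℕ → Prop)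

lemma lex_append_left (d : List ℕ) {a b : List ℕ} (h : LexN a b) : LexN (d ++ a) (d ++ b) := by
  induction d with
  | nil => simpa
  | cons x d ih => exact List.Lex.cons ih

lemma lex_nil_right {a : List ℕ} (h : LexN a []) : False := by cases h

lemma lex_append_self (q e : List ℕ) : ¬ LexN (q ++ e) q := by
  induction q with
  | nil => intro h; cases h
  | cons x q ih =>
    intro h
    cases h with
    | cons h => exact ih h
    | rel h => exact lt_irrefl _ h

lemma lex_asymm : ∀ {a b : List ℕ}, LexN a b → LexN b a → False := by
  intro a b h1
  induction h1 with
  | nil => intro h2; cases h2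
  | @rel a l₁ b l₂ h => intro h2; cases h2 with
    | rel h' => exact absurd h (lt_asymm h')
    | cons _ => exact lt_irrefl _ h
  | @cons a l₁ l₂ h ih => intro h2; cases h2 with
    | rel h' => exact lt_irrefl _ h'
    | cons h' => exact ih h'

/-- strictly-left-or-above, in terms of direction lists -/
def SB (q d : List ℕ) : Prop := LexN q d ∨ ∃ e, e ≠ [] ∧ d = q ++ e

lemma lo_lex {A B : Ctx} (h : LOOrder A B) : LexN A.dirs B.dirs := by
  cases h with
  | inl h =>
    induction h with
    | @root C h =>
      cases C <;> first
        | exact absurd rfl h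
        | exact List.Lex.nil
    | closure D _ ih => rw [dirs_comp, dirs_comp]; exact lex_append_left _ ih
  | inr h =>
    induction h with
    | app _ _ => exact List.Lex.rel (by norm_num)
    | sub _ _ => exact List.Lex.rel (by norm_num)
    | closure D _ ih => rw [dirs_comp, dirs_comp]; exact lex_append_left _ ih

lemma MC {r : Term} {Cpos Q : Ctx} {u₀ : Term} (hlo : IsLOPos r Cpos)
    (hQ : StepAt Q r u₀) (hb : SB Q.dirs Cpos.dirs) : False := by
  have hne : Q ≠ Cpos := by
    rintro rfl
    rcases hb with h | ⟨e, he, h⟩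
    · exact lex_append_self Q.dirs [] (by simpa using h)
    · have := congrArg List.length h
      simp at this
      exact he this
  have hord := hlo Q ⟨u₀, hQ⟩ hne
  have hlex := lo_lex hord
  rcases hb with h | ⟨e, he, hpre⟩
  · exact lex_asymm h hlex
  · rw [hpre] at hlex; exact lex_append_self _ _ hlex


/- ===== occurrences and free variables ===== -/

lemma exists_occ {z : ℕ} : ∀ {s : Term}, z ∈ s.fv →
    ∃ C : Ctx, s = C.plug (.var z) ∧ z ∉ C.binders := by
  intro s
  induction s with
  | var y =>
    intro h
    simp [Term.fv] at h
    exact ⟨.hole, by simp [Ctx.plug, h], by simp [Ctx.binders]⟩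
  | lam y s ih =>
    intro h
    simp [Term.fv] at h
    obtain ⟨C, hC, hb⟩ := ih h.2
    exact ⟨.lam y C, by simp [Ctx.plug, hC], by simp [Ctx.binders, hb, h.1]⟩
  | app p a ihp iha =>
    intro h
    simp [Term.fv] at h
    rcases h with h | h
    · obtain ⟨C, hC, hb⟩ := ihp h
      exact ⟨.appL C a, by simp [Ctx.plug, hC], by simpa [Ctx.binders] using hb⟩
    · obtain ⟨C, hC, hb⟩ := iha h
      exact ⟨.appR p C, by simp [Ctx.plug, hC], by simpa [Ctx.binders] using hb⟩
  | sub s y u ihs ihu =>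
    intro h
    simp [Term.fv] at h
    rcases h with ⟨hzy, h⟩ | h
    · obtain ⟨C, hC, hb⟩ := ihs h
      exact ⟨.subL C y u, by simp [Ctx.plug, hC], by simp [Ctx.binders, hb, hzy]⟩
    · obtain ⟨C, hC, hb⟩ := ihu h
      exact ⟨.subR s y C, by simp [Ctx.plug, hC], by simpa [Ctx.binders] using hb⟩

lemma occ_fv {z : ℕ} : ∀ {C : Ctx}, z ∉ C.binders → z ∈ (C.plug (.var z)).fv := by
  intro C
  induction C with
  | hole => intro _; simp [Ctx.plug, Term.fv]
  | lam y C ih =>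
    intro h; simp [Ctx.binders] at h
    simp [Ctx.plug, Term.fv, ih h.2, h.1]
  | appL C a ih =>
    intro h; simp [Ctx.binders] at h
    simp [Ctx.plug, Term.fv, ih h]
  | appR p C ih =>
    intro h; simp [Ctx.binders] at h
    simp [Ctx.plug, Term.fv, ih h]
  | subL C y u ih =>
    intro h; simp [Ctx.binders] at h
    simp [Ctx.plug, Term.fv, ih h.2, h.1]
  | subR s y C ih =>
    intro h; simp [Ctx.binders] at h
    simp [Ctx.plug, Term.fv, ih h]

/- ===== lifting steps ===== -/

lemma stepAt_comp {P : Ctx} {s u : Term} (E : Ctx) (h : StepAt P s u) :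
    StepAt (E.comp P) (E.plug s) (E.plug u) := by
  rcases h with ⟨t', u', hroot, hs, hu⟩ | ⟨w, C', C, x, hb, hCp, ht, hu⟩
  · exact Or.inl ⟨t', u', hroot, by rw [plug_comp, hs], by rw [plug_comp, hu]⟩
  · refine Or.inr ⟨w, E.comp C', C, x, hb, by rw [hCp, comp_assoc], ?_, ?_⟩
    · rw [ht, plug_comp]
    · rw [hu, plug_comp]

/- ===== skeletons ===== -/

lemma subskel_trans : ∀ {a b c : TSkel}, IsSubTSkel a b → IsSubTSkel b c → IsSubTSkel a c := by
  intro a b c h1 h2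
  induction h2 with
  | refl => exact h1
  | lam _ ih => exact .lam ih
  | appL _ ih => exact .appL ih
  | appR _ ih => exact .appR ih
  | subL _ ih => exact .subL ih
  | subR _ ih => exact .subR ih

lemma subskel_plug : ∀ (C : Ctx) (s : Term), IsSubTSkel s.skel (C.plug s).skel := by
  intro C s
  induction C with
  | hole => exact .refl _
  | lam y C ih => exact .lam ih
  | appL C a ih => exact .appL ih
  | appR p C ih => exact .appR ih
  | subL C y u ih => exact .subL ih
  | subR s₀ y C ih => exact .subR ih

/-- skeletons with no explicit substitution -/
def NS : TSkel → Prop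
  | .var => True
  | .lam s => NS s
  | .app a b => NS a ∧ NS b
  | .sub _ _ => False

lemma pure_skel_ns : ∀ (t : Term), t.isPure → NS t.skel := by
  intro t
  induction t <;> simp_all [Term.isPure, Term.skel, NS]

lemma ns_sub : ∀ {a b : TSkel}, IsSubTSkel a b → NS b → NS a := by
  intro a b h
  induction h <;> simp_all [NS]

/- ===== chains ===== -/

inductive Chain : Ctx → Prop
  | hole : Chain .hole
  | lam {x : ℕ} {C : Ctx} : Chain C → Chain (.lam x C)
  | subL {C : Ctx} {x : ℕ} {u : Term} : Chain C → Chain (.subL C x u)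

lemma chain_lform {K : Ctx} (hK : Chain K) :
    ∀ {q : Term}, (∃ L x b, IsSubCtx L ∧ q = L.plug (.lam x b)) →
    ∃ L x b, IsSubCtx L ∧ K.plug q = L.plug (.lam x b) := by
  induction hK with
  | hole => intro q h; simpa [Ctx.plug] using h
  | @lam x C _ _ =>
    intro q _
    exact ⟨.hole, x, C.plug q, .hole, by simp [Ctx.plug]⟩
  | @subL C x u _ ih =>
    intro q h
    obtain ⟨L, y, b, hL, he⟩ := ih h
    exact ⟨.subL L x u, y, b, .sub hL, by simp [Ctx.plug, he]⟩

/- ===== scope tracking ===== -/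

def fbnd : Ctx → Bool → Finset ℕ → Finset ℕ
  | .hole, _, B => B
  | .lam x C, h, B => fbnd C h (if h then insert x B else B.erase x)
  | .appL C _, _, B => fbnd C true B
  | .appR _ C, _, B => fbnd C false B
  | .subL C x _, h, B => fbnd C h (insert x B)
  | .subR _ _ C, _, B => fbnd C false B

def flg : Ctx → Bool → Bool
  | .hole, h => h
  | .lam _ C, h => flg C h
  | .appL C _, _ => flg C true
  | .appR _ C, _ => flg C false
  | .subL C _ _, h => flg C h
  | .subR _ _ C, _ => flg C false

lemma fbnd_comp (A E : Ctx) (h : Bool) (B : Finset ℕ) :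
    fbnd (A.comp E) h B = fbnd E (flg A h) (fbnd A h B) := by
  induction A generalizing h B <;> simp [Ctx.comp, fbnd, flg, *]

lemma flg_comp (A E : Ctx) (h : Bool) : flg (A.comp E) h = flg E (flg A h) := by
  induction A generalizing h <;> simp [Ctx.comp, flg, *]

lemma fbnd_mono {z : ℕ} : ∀ (E : Ctx) (h : Bool) (B : Finset ℕ),
    z ∈ B → z ∉ E.binders → z ∈ fbnd E h B := by
  intro E
  induction E with
  | hole => intro h B hz _; simpa [fbnd] using hz
  | lam y C ih =>
    intro h B hz hb
    simp [Ctx.binders] at hb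
    refine ih h _ ?_ hb.2
    cases h <;> simp [fbnd, Finset.mem_erase, Finset.mem_insert, hz, hb.1]
  | appL C a ih => intro h B hz hb; exact ih true B hz (by simpa [Ctx.binders] using hb)
  | appR p C ih => intro h B hz hb; exact ih false B hz (by simpa [Ctx.binders] using hb)
  | subL C y u ih =>
    intro h B hz hb
    simp [Ctx.binders] at hb
    exact ih h _ (Finset.mem_insert_of_mem hz) hb.2
  | subR s y C ih => intro h B hz hb; exact ih false B hz (by simpa [Ctx.binders] using hb)

lemma FL : ∀ (D : Ctx) (h : Bool), flg D h = true →
    (∃ (D₁ K : Ctx) (c : Term), D = D₁.comp (.appL K c) ∧ Chain K) ∨ (h = true ∧ Chain D) := by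
  intro D
  induction D with
  | hole => intro h hh; exact Or.inr ⟨hh, .hole⟩
  | lam x C ih =>
    intro h hh
    rcases ih h (by simpa [flg] using hh) with ⟨D₁, K, c, hD, hK⟩ | ⟨hh', hC⟩
    · exact Or.inl ⟨.lam x D₁, K, c, by simp [Ctx.comp, hD], hK⟩
    · exact Or.inr ⟨hh', .lam hC⟩
  | appL C a ih =>
    intro h hh
    rcases ih true (by simpa [flg] using hh) with ⟨D₁, K, c, hD, hK⟩ | ⟨_, hC⟩
    · exact Or.inl ⟨.appL D₁ a, K, c, by simp [Ctx.comp, hD], hK⟩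
    · exact Or.inl ⟨.hole, C, a, by simp [Ctx.comp], hC⟩
  | appR p C ih =>
    intro h hh
    rcases ih false (by simpa [flg] using hh) with ⟨D₁, K, c, hD, hK⟩ | ⟨h', _⟩
    · exact Or.inl ⟨.appR p D₁, K, c, by simp [Ctx.comp, hD], hK⟩
    · simp at h'
  | subL C x u ih =>
    intro h hh
    rcases ih h (by simpa [flg] using hh) with ⟨D₁, K, c, hD, hK⟩ | ⟨hh', hC⟩
    · exact Or.inl ⟨.subL D₁ x u, K, c, by simp [Ctx.comp, hD], hK⟩
    · exact Or.inr ⟨hh', .subL hC⟩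
  | subR s x C ih =>
    intro h hh
    rcases ih false (by simpa [flg] using hh) with ⟨D₁, K, c, hD, hK⟩ | ⟨h', _⟩
    · exact Or.inl ⟨.subR s x D₁, K, c, by simp [Ctx.comp, hD], hK⟩
    · simp at h'


/- ===== where do scope variables come from ===== -/

lemma R3 : ∀ (D : Ctx) (h : Bool) (B₀ : Finset ℕ) (z : ℕ), z ∈ fbnd D h B₀ →
    (z ∈ B₀ ∧ z ∉ D.binders) ∨
    (∃ (D₁ D₂ : Ctx) (w : Term), D = D₁.comp (.subL D₂ z w) ∧ z ∉ D₂.binders) ∨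
    (∃ (D₁ K : Ctx) (y : ℕ) (D₂ : Ctx) (c : Term),
        D = D₁.comp (.appL (K.comp (.lam y D₂)) c) ∧ Chain K) ∨
    (h = true ∧ ∃ (K : Ctx) (y : ℕ) (D₂ : Ctx), D = K.comp (.lam y D₂) ∧ Chain K) := by
  intro D
  induction D with
  | hole =>
    intro h B₀ z hz
    exact Or.inl ⟨by simpa [fbnd] using hz, by simp [Ctx.binders]⟩
  | lam x C ih =>
    intro h B₀ z hz
    simp only [fbnd] at hz
    rcases ih h _ z hz with ⟨h1, h2⟩ | ⟨D₁, D₂, w, hD, hb⟩ | ⟨D₁, K, y, D₂, c, hD, hK⟩ | ⟨hh, K, y, D₂, hD, hK⟩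
    · cases h with
      | false =>
        simp [Finset.mem_erase] at h1
        exact Or.inl ⟨h1.2, by simp [Ctx.binders, h1.1, h2]⟩
      | true =>
        rcases Finset.mem_insert.mp h1 with rfl | h1'
        · exact Or.inr (Or.inr (Or.inr ⟨rfl, .hole, z, C, by simp [Ctx.comp], .hole⟩))
        · by_cases hzx : z = x
          · subst hzx
            exact Or.inr (Or.inr (Or.inr ⟨rfl, .hole, z, C, by simp [Ctx.comp], .hole⟩))
          · exact Or.inl ⟨h1', by simp [Ctx.binders, hzx, h2]⟩
    · exact Or.inr (Or.inl ⟨.lam x D₁, D₂, w, by simp [Ctx.comp, hD], hb⟩)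
    · exact Or.inr (Or.inr (Or.inl ⟨.lam x D₁, K, y, D₂, c, by simp [Ctx.comp, hD], hK⟩))
    · exact Or.inr (Or.inr (Or.inr ⟨hh, .lam x K, y, D₂, by simp [Ctx.comp, hD], .lam hK⟩))
  | appL C a ih =>
    intro h B₀ z hz
    simp only [fbnd] at hz
    rcases ih true _ z hz with ⟨h1, h2⟩ | ⟨D₁, D₂, w, hD, hb⟩ | ⟨D₁, K, y, D₂, c, hD, hK⟩ | ⟨_, K, y, D₂, hD, hK⟩
    · exact Or.inl ⟨h1, by simpa [Ctx.binders] using h2⟩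
    · exact Or.inr (Or.inl ⟨.appL D₁ a, D₂, w, by simp [Ctx.comp, hD], hb⟩)
    · exact Or.inr (Or.inr (Or.inl ⟨.appL D₁ a, K, y, D₂, c, by simp [Ctx.comp, hD], hK⟩))
    · exact Or.inr (Or.inr (Or.inl ⟨.hole, K, y, D₂, a, by simp [Ctx.comp, hD], hK⟩))
  | appR p C ih =>
    intro h B₀ z hz
    simp only [fbnd] at hz
    rcases ih false _ z hz with ⟨h1, h2⟩ | ⟨D₁, D₂, w, hD, hb⟩ | ⟨D₁, K, y, D₂, c, hD, hK⟩ | ⟨h', _⟩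
    · exact Or.inl ⟨h1, by simpa [Ctx.binders] using h2⟩
    · exact Or.inr (Or.inl ⟨.appR p D₁, D₂, w, by simp [Ctx.comp, hD], hb⟩)
    · exact Or.inr (Or.inr (Or.inl ⟨.appR p D₁, K, y, D₂, c, by simp [Ctx.comp, hD], hK⟩))
    · simp at h'
  | subL C x u ih =>
    intro h B₀ z hz
    simp only [fbnd] at hz
    rcases ih h _ z hz with ⟨h1, h2⟩ | ⟨D₁, D₂, w, hD, hb⟩ | ⟨D₁, K, y, D₂, c, hD, hK⟩ | ⟨hh, K, y, D₂, hD, hK⟩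
    · rcases Finset.mem_insert.mp h1 with rfl | h1'
      · exact Or.inr (Or.inl ⟨.hole, C, u, by simp [Ctx.comp], h2⟩)
      · by_cases hzx : z = x
        · subst hzx
          exact Or.inr (Or.inl ⟨.hole, C, u, by simp [Ctx.comp], h2⟩)
        · exact Or.inl ⟨h1', by simp [Ctx.binders, hzx, h2]⟩
    · exact Or.inr (Or.inl ⟨.subL D₁ x u, D₂, w, by simp [Ctx.comp, hD], hb⟩)
    · exact Or.inr (Or.inr (Or.inl ⟨.subL D₁ x u, K, y, D₂, c, by simp [Ctx.comp, hD], hK⟩))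
    · exact Or.inr (Or.inr (Or.inr ⟨hh, .subL K x u, y, D₂, by simp [Ctx.comp, hD], .subL hK⟩))
  | subR s x C ih =>
    intro h B₀ z hz
    simp only [fbnd] at hz
    rcases ih false _ z hz with ⟨h1, h2⟩ | ⟨D₁, D₂, w, hD, hb⟩ | ⟨D₁, K, y, D₂, c, hD, hK⟩ | ⟨h', _⟩
    · exact Or.inl ⟨h1, by simpa [Ctx.binders] using h2⟩
    · exact Or.inr (Or.inl ⟨.subR s x D₁, D₂, w, by simp [Ctx.comp, hD], hb⟩)
    · exact Or.inr (Or.inr (Or.inl ⟨.subR s x D₁, K, y, D₂, c, by simp [Ctx.comp, hD], hK⟩))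
    · simp at h'

/- ===== the invariant ===== -/

def Good (T : TSkel) : Term → Finset ℕ → Bool → Prop
  | .var _, _, _ => True
  | .lam x s, B, h => Good T s (if h then insert x B else B.erase x) h
  | .app p a, B, _ => Good T p B true ∧ Good T a B false ∧
      (IsSubTSkel a.skel T ∨ (Neutral p ∧ p.fv ∩ B = ∅))
  | .sub s x u, B, h => Good T s (insert x B) h ∧ Good T u B false ∧
      (IsSubTSkel u.skel T ∨ (TermNormal s ∧ s.fv ∩ insert x B = ∅ ∧
        (h = true → ¬∃ (L : Ctx) (y : ℕ) (b : Term), IsSubCtx L ∧ s = L.plug (.lam y b))))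

lemma good_clean {T : TSkel} (hT : NS T) :
    ∀ (s : Term), IsSubTSkel s.skel T → ∀ B h, Good T s B h := by
  intro s
  induction s with
  | var y => intro _ B h; trivial
  | lam y s ih =>
    intro hs B h
    have hs' : IsSubTSkel s.skel T :=
      subskel_trans (.lam (.refl _)) hs
    exact ih hs' _ _
  | app p a ihp iha =>
    intro hs B h
    have hp : IsSubTSkel p.skel T := subskel_trans (.appL (.refl _)) hs
    have ha : IsSubTSkel a.skel T := subskel_trans (.appR (.refl _)) hs
    exact ⟨ihp hp _ _, iha ha _ _, Or.inl ha⟩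
  | sub s y u ihs ihu =>
    intro hs B h
    exact absurd (ns_sub hs hT) (by simp [NS, Term.skel])

lemma good_mono {T : TSkel} :
    ∀ (s : Term) (B B' : Finset ℕ) (h h' : Bool), B' ⊆ B → (h' = true → h = true) →
      Good T s B h → Good T s B' h' := by
  intro s
  induction s with
  | var y => intro _ _ _ _ _ _ _; trivial
  | lam y s ih =>
    intro B B' h h' hsub hh hg
    simp only [Good] at hg ⊢
    refine ih _ _ _ _ ?_ hh hg
    intro a ha
    cases h' with
    | false =>
      cases h with
      | false =>
        simp [Finset.mem_erase] at ha ⊢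
        exact ⟨ha.1, hsub ha.2⟩
      | true =>
        simp [Finset.mem_erase] at ha
        simp [Finset.mem_insert]
        exact Or.inr (hsub ha.2)
    | true =>
      have hht := hh rfl; subst hht
      simp [Finset.mem_insert] at ha ⊢
      rcases ha with h | h
      · exact Or.inl h
      · exact Or.inr (hsub h)
  | app p a ihp iha =>
    intro B B' h h' hsub hh hg
    obtain ⟨hp, ha, hcond⟩ := hg
    refine ⟨ihp _ _ _ _ hsub (fun _ => rfl) hp, iha _ _ _ _ hsub (by simp) ha, ?_⟩
    rcases hcond with hl | ⟨hn, hfv⟩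
    · exact Or.inl hl
    · refine Or.inr ⟨hn, ?_⟩
      rw [Finset.eq_empty_iff_forall_notMem] at hfv ⊢
      intro z hz
      rw [Finset.mem_inter] at hz
      exact hfv z (Finset.mem_inter.mpr ⟨hz.1, hsub hz.2⟩)
  | sub s y u ihs ihu =>
    intro B B' h h' hsub hh hg
    obtain ⟨hs, hu, hcond⟩ := hg
    refine ⟨ihs _ _ _ _ (Finset.insert_subset_insert _ hsub) hh hs,
      ihu _ _ _ _ hsub (by simp) hu, ?_⟩
    rcases hcond with hl | ⟨hn, hfv, hcl⟩
    · exact Or.inl hl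
    · refine Or.inr ⟨hn, ?_, fun hht => hcl (hh hht)⟩
      rw [Finset.eq_empty_iff_forall_notMem] at hfv ⊢
      intro z hz
      rw [Finset.mem_inter] at hz
      exact hfv z (Finset.mem_inter.mpr ⟨hz.1, Finset.insert_subset_insert _ hsub hz.2⟩)

lemma gdesc {T : TSkel} : ∀ (C : Ctx) {s : Term} {B : Finset ℕ} {h : Bool},
    Good T (C.plug s) B h → ∃ B' h', Good T s B' h' := by
  intro C
  induction C with
  | hole => intro s B h hg; exact ⟨B, h, hg⟩
  | lam y C ih => intro s B h hg; exact ih hg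
  | appL C a ih => intro s B h hg; exact ih hg.1
  | appR p C ih => intro s B h hg; exact ih hg.2.1
  | subL C y u ih => intro s B h hg; exact ih hg.1
  | subR s₀ y C ih => intro s B h hg; exact ih hg.2.1


/- ===== blocking lemmas from LO-ness ===== -/

lemma block_z {r : Term} {D Cpos : Ctx} (hlo : IsLOPos r Cpos) {z : ℕ}
    (hz : z ∈ fbnd D false ∅) (E : Ctx)
    (hr : r = (D.comp E).plug (.var z))
    (hEb : z ∉ E.binders)
    (hQSB : SB (D.comp E).dirs Cpos.dirs)
    (hpos : ∃ e₀, Cpos.dirs = D.dirs ++ e₀) : False := by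
  rcases R3 D false ∅ z hz with ⟨h1, _⟩ | ⟨D₁, D₂, w₂, hD, hb2⟩ |
    ⟨D₁, K, y, D₂, c, hD, hK⟩ | ⟨h', _⟩
  · simp at h1
  · have hQ : D.comp E = D₁.comp (.subL (D₂.comp E) z w₂) := by
      rw [hD, comp_assoc]; simp [Ctx.comp]
    have hbind : z ∉ (D₂.comp E).binders := by
      rw [binders_comp]; simp [hb2, hEb]
    have hstep : StepAt (D.comp E) r ((D.comp E).plug w₂) :=
      Or.inr ⟨w₂, D₁, D₂.comp E, z, hbind, hQ, hr, rfl⟩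
    exact MC hlo hstep hQSB
  · obtain ⟨L, y', b', hL, heq⟩ := chain_lform hK
      (q := .lam y (D₂.plug (E.plug (.var z))))
      ⟨.hole, y, D₂.plug (E.plug (.var z)), .hole, rfl⟩
    have hrD : r = D₁.plug (.app (L.plug (.lam y' b')) c) := by
      rw [hr, hD, comp_assoc, plug_comp]
      rw [← heq]
      simp [Ctx.comp, Ctx.plug, plug_comp]
    have hstep : StepAt D₁ r (D₁.plug (L.plug (.sub b' y' c))) :=
      Or.inl ⟨_, _, ⟨L, y', b', c, hL, rfl, rfl⟩, hrD, rfl⟩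
    obtain ⟨e₀, he₀⟩ := hpos
    apply MC hlo hstep
    refine Or.inr ⟨0 :: (K.comp (.lam y D₂)).dirs ++ e₀, by simp, ?_⟩
    rw [he₀, hD, dirs_comp]
    simp [Ctx.dirs]
  · simp at h'

lemma esta {r : Term} {D : Ctx} {p a : Term} {C₁ : Ctx}
    (hr : r = D.plug (.app p a)) (hlo : IsLOPos r (D.comp (.appR p C₁))) :
    Neutral p ∧ p.fv ∩ fbnd D false ∅ = ∅ := by
  have hpos : ∃ e₀, (D.comp (.appR p C₁)).dirs = D.dirs ++ e₀ := ⟨_, dirs_comp _ _⟩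
  have hsb : ∀ Q : Ctx, SB (D.comp (.appL Q a)).dirs (D.comp (.appR p C₁)).dirs := by
    intro Q
    refine Or.inl ?_
    rw [dirs_comp, dirs_comp]
    refine lex_append_left _ ?_
    exact List.Lex.rel (by norm_num)
  have hnorm : TermNormal p := by
    intro u₀ hstep
    obtain ⟨Q, hQ⟩ := hstep
    have hlift := stepAt_comp (D.comp (.appL .hole a)) hQ
    rw [comp_assoc] at hlift
    have h2 : Ctx.comp (.appL .hole a) Q = .appL Q a := by simp [Ctx.comp]
    rw [h2] at hlift
    have hpl : (D.comp (.appL .hole a)).plug p = r := by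
      rw [plug_comp, hr]; rfl
    rw [hpl] at hlift
    exact MC hlo hlift (hsb Q)
  have hnl : ¬ ∃ (L : Ctx) (x : ℕ) (b : Term), IsSubCtx L ∧ p = L.plug (.lam x b) := by
    rintro ⟨L, x, b, hL, hp⟩
    have hroot : RootM (.app p a) (L.plug (.sub b x a)) := ⟨L, x, b, a, hL, by rw [hp], rfl⟩
    have hstep : StepAt D r (D.plug (L.plug (.sub b x a))) := Or.inl ⟨_, _, hroot, hr, rfl⟩
    apply MC hlo hstep
    exact Or.inr ⟨_, by simp [Ctx.dirs], dirs_comp _ _⟩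
  have hfv : p.fv ∩ fbnd D false ∅ = ∅ := by
    rw [Finset.eq_empty_iff_forall_notMem]
    intro z hz
    rw [Finset.mem_inter] at hz
    obtain ⟨C_s, hCs, hCsb⟩ := exists_occ hz.1
    refine block_z hlo hz.2 (.appL C_s a) ?_ (by simpa [Ctx.binders] using hCsb)
      (hsb C_s) hpos
    rw [hr, hCs, plug_comp]; rfl
  exact ⟨⟨hnorm, hnl⟩, hfv⟩

lemma ests {r : Term} {D : Ctx} {s₀ u₀ : Term} {x : ℕ} {C₁ : Ctx}
    (hr : r = D.plug (.sub s₀ x u₀)) (hlo : IsLOPos r (D.comp (.subR s₀ x C₁))) :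
    TermNormal s₀ ∧ s₀.fv ∩ insert x (fbnd D false ∅) = ∅ ∧
      (flg D false = true →
        ¬∃ (L : Ctx) (y : ℕ) (b : Term), IsSubCtx L ∧ s₀ = L.plug (.lam y b)) := by
  have hpos : ∃ e₀, (D.comp (.subR s₀ x C₁)).dirs = D.dirs ++ e₀ := ⟨_, dirs_comp _ _⟩
  have hsb : ∀ Q : Ctx, SB (D.comp (.subL Q x u₀)).dirs (D.comp (.subR s₀ x C₁)).dirs := by
    intro Q
    refine Or.inl ?_
    rw [dirs_comp, dirs_comp]
    refine lex_append_left _ ?_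
    exact List.Lex.rel (by norm_num)
  have hnorm : TermNormal s₀ := by
    intro v₀ hstep
    obtain ⟨Q, hQ⟩ := hstep
    have hlift := stepAt_comp (D.comp (.subL .hole x u₀)) hQ
    rw [comp_assoc] at hlift
    have h2 : Ctx.comp (.subL .hole x u₀) Q = .subL Q x u₀ := by simp [Ctx.comp]
    rw [h2] at hlift
    have hpl : (D.comp (.subL .hole x u₀)).plug s₀ = r := by
      rw [plug_comp, hr]; rfl
    rw [hpl] at hlift
    exact MC hlo hlift (hsb Q)
  have hfv : s₀.fv ∩ insert x (fbnd D false ∅) = ∅ := by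
    rw [Finset.eq_empty_iff_forall_notMem]
    intro z hz
    rw [Finset.mem_inter] at hz
    obtain ⟨C_s, hCs, hCsb⟩ := exists_occ hz.1
    by_cases hzx : z = x
    · subst hzx
      have hstep : StepAt (D.comp (.subL C_s z u₀)) r ((D.comp (.subL C_s z u₀)).plug u₀) := by
        refine Or.inr ⟨u₀, D, C_s, z, hCsb, rfl, ?_, rfl⟩
        rw [hr, hCs, plug_comp]; rfl
      exact MC hlo hstep (hsb C_s)
    · have hzB : z ∈ fbnd D false ∅ := by
        rcases Finset.mem_insert.mp hz.2 with h | h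
        · exact absurd h hzx
        · exact h
      refine block_z hlo hzB (.subL C_s x u₀) ?_ (by simp [Ctx.binders, hzx, hCsb])
        (hsb C_s) hpos
      rw [hr, hCs, plug_comp]; rfl
  have hcl : flg D false = true →
      ¬∃ (L : Ctx) (y : ℕ) (b : Term), IsSubCtx L ∧ s₀ = L.plug (.lam y b) := by
    intro hfl
    rintro ⟨L, y, b, hL, hs₀⟩
    rcases FL D false hfl with ⟨D₁, K, c, hD, hK⟩ | ⟨h', _⟩
    · obtain ⟨L₂, y₂, b₂, hL₂, heq⟩ := chain_lform hK (q := .sub s₀ x u₀)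
        ⟨.subL L x u₀, y, b, .sub hL, by simp [Ctx.plug, hs₀]⟩
      have hrD : r = D₁.plug (.app (L₂.plug (.lam y₂ b₂)) c) := by
        rw [hr, hD, plug_comp, ← heq]
        simp [Ctx.plug]
      have hstep : StepAt D₁ r (D₁.plug (L₂.plug (.sub b₂ y₂ c))) :=
        Or.inl ⟨_, _, ⟨L₂, y₂, b₂, c, hL₂, rfl, rfl⟩, hrD, rfl⟩
      obtain ⟨e₀, he₀⟩ := hpos
      apply MC hlo hstep
      refine Or.inr ⟨0 :: K.dirs ++ e₀, by simp, ?_⟩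
      rw [he₀, hD, dirs_comp]
      simp [Ctx.dirs]
    · simp at h'
  exact ⟨hnorm, hfv, hcl⟩


/- ===== step inversion lemmas ===== -/

lemma stepAt_lam_inv {x : ℕ} {P₁ : Ctx} {s s' : Term} (h : StepAt (.lam x P₁) s s') :
    ∃ c c', s = .lam x c ∧ s' = .lam x c' ∧ StepAt P₁ c c' := by
  rcases h with ⟨t', u', hroot, hs, hu⟩ | ⟨w, C', C, x₀, hb, hCp, ht, hu⟩
  · exact ⟨P₁.plug t', P₁.plug u', by simp [Ctx.plug] at hs; exact hs,
      by simp [Ctx.plug] at hu; exact hu, Or.inl ⟨t', u', hroot, rfl, rfl⟩⟩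
  · cases C' with
    | lam x₂ C₂ =>
      simp only [Ctx.comp, Ctx.lam.injEq] at hCp
      obtain ⟨hx, hP⟩ := hCp
      subst hx
      refine ⟨P₁.plug (.var x₀), P₁.plug w, by rw [ht]; simp [Ctx.plug],
        by rw [hu]; simp [Ctx.plug], Or.inr ⟨w, C₂, C, x₀, hb, hP, rfl, rfl⟩⟩
    | hole => simp [Ctx.comp] at hCp
    | appL C₂ a₂ => simp [Ctx.comp] at hCp
    | appR p₂ C₂ => simp [Ctx.comp] at hCp
    | subL C₂ y₂ u₂ => simp [Ctx.comp] at hCp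
    | subR s₂ y₂ C₂ => simp [Ctx.comp] at hCp

lemma stepAt_appL_inv {P₁ : Ctx} {a s s' : Term} (h : StepAt (.appL P₁ a) s s') :
    ∃ c c', s = .app c a ∧ s' = .app c' a ∧ StepAt P₁ c c' := by
  rcases h with ⟨t', u', hroot, hs, hu⟩ | ⟨w, C', C, x₀, hb, hCp, ht, hu⟩
  · exact ⟨P₁.plug t', P₁.plug u', by simp [Ctx.plug] at hs; exact hs,
      by simp [Ctx.plug] at hu; exact hu, Or.inl ⟨t', u', hroot, rfl, rfl⟩⟩
  · cases C' with
    | appL C₂ a₂ =>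
      simp only [Ctx.comp, Ctx.appL.injEq] at hCp
      obtain ⟨hP, ha⟩ := hCp
      subst ha
      refine ⟨P₁.plug (.var x₀), P₁.plug w, by rw [ht]; simp [Ctx.plug],
        by rw [hu]; simp [Ctx.plug], Or.inr ⟨w, C₂, C, x₀, hb, hP, rfl, rfl⟩⟩
    | hole => simp [Ctx.comp] at hCp
    | lam x₂ C₂ => simp [Ctx.comp] at hCp
    | appR p₂ C₂ => simp [Ctx.comp] at hCp
    | subL C₂ y₂ u₂ => simp [Ctx.comp] at hCp
    | subR s₂ y₂ C₂ => simp [Ctx.comp] at hCp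

lemma stepAt_appR_inv {P₁ : Ctx} {p s s' : Term} (h : StepAt (.appR p P₁) s s') :
    ∃ c c', s = .app p c ∧ s' = .app p c' ∧ StepAt P₁ c c' := by
  rcases h with ⟨t', u', hroot, hs, hu⟩ | ⟨w, C', C, x₀, hb, hCp, ht, hu⟩
  · exact ⟨P₁.plug t', P₁.plug u', by simp [Ctx.plug] at hs; exact hs,
      by simp [Ctx.plug] at hu; exact hu, Or.inl ⟨t', u', hroot, rfl, rfl⟩⟩
  · cases C' with
    | appR p₂ C₂ =>
      simp only [Ctx.comp, Ctx.appR.injEq] at hCp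
      obtain ⟨hp, hP⟩ := hCp
      subst hp
      refine ⟨P₁.plug (.var x₀), P₁.plug w, by rw [ht]; simp [Ctx.plug],
        by rw [hu]; simp [Ctx.plug], Or.inr ⟨w, C₂, C, x₀, hb, hP, rfl, rfl⟩⟩
    | hole => simp [Ctx.comp] at hCp
    | lam x₂ C₂ => simp [Ctx.comp] at hCp
    | appL C₂ a₂ => simp [Ctx.comp] at hCp
    | subL C₂ y₂ u₂ => simp [Ctx.comp] at hCp
    | subR s₂ y₂ C₂ => simp [Ctx.comp] at hCp

lemma stepAt_subR_inv {P₁ : Ctx} {s₀ : Term} {y : ℕ} {s s' : Term}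
    (h : StepAt (.subR s₀ y P₁) s s') :
    ∃ c c', s = .sub s₀ y c ∧ s' = .sub s₀ y c' ∧ StepAt P₁ c c' := by
  rcases h with ⟨t', u', hroot, hs, hu⟩ | ⟨w, C', C, x₀, hb, hCp, ht, hu⟩
  · exact ⟨P₁.plug t', P₁.plug u', by simp [Ctx.plug] at hs; exact hs,
      by simp [Ctx.plug] at hu; exact hu, Or.inl ⟨t', u', hroot, rfl, rfl⟩⟩
  · cases C' with
    | subR s₂ y₂ C₂ =>
      simp only [Ctx.comp, Ctx.subR.injEq] at hCp
      obtain ⟨hs₀, hy, hP⟩ := hCp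
      subst hs₀; subst hy
      refine ⟨P₁.plug (.var x₀), P₁.plug w, by rw [ht]; simp [Ctx.plug],
        by rw [hu]; simp [Ctx.plug], Or.inr ⟨w, C₂, C, x₀, hb, hP, rfl, rfl⟩⟩
    | hole => simp [Ctx.comp] at hCp
    | lam x₂ C₂ => simp [Ctx.comp] at hCp
    | appL C₂ a₂ => simp [Ctx.comp] at hCp
    | appR p₂ C₂ => simp [Ctx.comp] at hCp
    | subL C₂ y₂ u₂ => simp [Ctx.comp] at hCp

lemma stepAt_subL_inv {P₁ : Ctx} {y : ℕ} {u : Term} {s s' : Term}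
    (h : StepAt (.subL P₁ y u) s s') :
    (∃ c c', s = .sub c y u ∧ s' = .sub c' y u ∧ StepAt P₁ c c') ∨
    (s = .sub (P₁.plug (.var y)) y u ∧ s' = .sub (P₁.plug u) y u ∧ y ∉ P₁.binders) := by
  rcases h with ⟨t', u', hroot, hs, hu⟩ | ⟨w, C', C, x₀, hb, hCp, ht, hu⟩
  · exact Or.inl ⟨P₁.plug t', P₁.plug u', by simp [Ctx.plug] at hs; exact hs,
      by simp [Ctx.plug] at hu; exact hu, Or.inl ⟨t', u', hroot, rfl, rfl⟩⟩
  · cases C' with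
    | subL C₂ y₂ u₂ =>
      simp only [Ctx.comp, Ctx.subL.injEq] at hCp
      obtain ⟨hP, hy, hu₂⟩ := hCp
      subst hy; subst hu₂
      refine Or.inl ⟨P₁.plug (.var x₀), P₁.plug w, by rw [ht]; simp [Ctx.plug],
        by rw [hu]; simp [Ctx.plug], Or.inr ⟨w, C₂, C, x₀, hb, hP, rfl, rfl⟩⟩
    | hole =>
      simp only [Ctx.comp, Ctx.subL.injEq] at hCp
      obtain ⟨hP, hy, hu₂⟩ := hCp
      subst hy; subst hu₂; subst hP
      refine Or.inr ⟨by rw [ht]; simp [Ctx.plug], by rw [hu]; simp [Ctx.plug], hb⟩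
    | lam x₂ C₂ => simp [Ctx.comp] at hCp
    | appL C₂ a₂ => simp [Ctx.comp] at hCp
    | appR p₂ C₂ => simp [Ctx.comp] at hCp
    | subR s₂ y₂ C₂ => simp [Ctx.comp] at hCp


/- ===== the multiplicative rearrangement preserves the invariant ===== -/

lemma gm {T : TSkel} (hT : NS T) {L : Ctx} (hL : IsSubCtx L) :
    ∀ {x : ℕ} {b a : Term} {B : Finset ℕ} {h : Bool},
      Good T (L.plug (.lam x b)) B true → IsSubTSkel a.skel T →
      Good T (L.plug (.sub b x a)) B h := by
  induction hL with
  | hole =>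
    intro x b a B h hg ha
    simp only [Ctx.plug, Good] at hg ⊢
    simp only [if_true] at hg
    refine ⟨?_, good_clean hT a ha _ _, Or.inl ha⟩
    exact good_mono b _ _ _ _ (Finset.Subset.refl _) (fun _ => rfl) hg
  | @sub L₀ y v _ ih =>
    intro x b a B h hg ha
    simp only [Ctx.plug, Good] at hg ⊢
    obtain ⟨hbody, hv, hcond⟩ := hg
    refine ⟨ih hbody ha, hv, ?_⟩
    rcases hcond with hl | ⟨_, _, hcl⟩
    · exact Or.inl hl
    · exact absurd ⟨_, x, b, (by assumption), rfl⟩ (hcl trivial)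

/- ===== replacement of a variable occurrence by a clean term ===== -/

lemma rep {T : TSkel} (hT : NS T) :
    ∀ (C D : Ctx) (z : ℕ) (w : Term),
      IsSubTSkel w.skel T → z ∉ C.binders → z ∈ fbnd D false ∅ →
      Good T (C.plug (.var z)) (fbnd D false ∅) (flg D false) →
      IsLOPos (D.plug (C.plug (.var z))) (D.comp C) →
      Good T (C.plug w) (fbnd D false ∅) (flg D false) := by
  intro C
  induction C with
  | hole => intro D z w hw _ _ _ _; exact good_clean hT w hw _ _
  | lam y C₁ ih =>
    intro D z w hw hb hz hg hlo
    simp [Ctx.binders] at hb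
    simp only [Ctx.plug, Good] at hg ⊢
    have e1 : fbnd (D.comp (.lam y .hole)) false ∅ =
        (if flg D false then insert y (fbnd D false ∅) else (fbnd D false ∅).erase y) := by
      rw [fbnd_comp]; simp [fbnd]
    have e2 : flg (D.comp (.lam y .hole)) false = flg D false := by
      rw [flg_comp]; simp [flg]
    have e3 : (D.comp (.lam y .hole)).comp C₁ = D.comp (.lam y C₁) := by
      rw [comp_assoc]; simp [Ctx.comp]
    have e4 : ∀ v : Term, (D.comp (.lam y .hole)).plug v = D.plug (.lam y v) := by
      intro v; rw [plug_comp]; rfl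
    have hz' : z ∈ fbnd (D.comp (.lam y .hole)) false ∅ := by
      rw [e1]
      cases hfl : flg D false <;> simp [Finset.mem_insert, Finset.mem_erase, hb.1, hz]
    have := ih (D.comp (.lam y .hole)) z w hw hb.2 hz'
      (by rw [e1, e2]; exact hg) (by rw [e3, e4]; exact hlo)
    rw [e1, e2] at this
    exact this
  | appL C₁ a ih =>
    intro D z w hw hb hz hg hlo
    simp [Ctx.binders] at hb
    simp only [Ctx.plug, Good] at hg ⊢
    obtain ⟨hp, ha, hcond⟩ := hg
    have haT : IsSubTSkel a.skel T := by
      rcases hcond with hl | ⟨_, hfv⟩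
      · exact hl
      · exfalso
        have hm : z ∈ (C₁.plug (.var z)).fv ∩ fbnd D false ∅ :=
          Finset.mem_inter.mpr ⟨occ_fv hb, hz⟩
        rw [hfv] at hm
        simp at hm
    refine ⟨?_, ha, Or.inl haT⟩
    have e1 : fbnd (D.comp (.appL .hole a)) false ∅ = fbnd D false ∅ := by
      rw [fbnd_comp]; simp [fbnd]
    have e2 : flg (D.comp (.appL .hole a)) false = true := by
      rw [flg_comp]; simp [flg]
    have e3 : (D.comp (.appL .hole a)).comp C₁ = D.comp (.appL C₁ a) := by
      rw [comp_assoc]; simp [Ctx.comp]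
    have e4 : ∀ v : Term, (D.comp (.appL .hole a)).plug v = D.plug (.app v a) := by
      intro v; rw [plug_comp]; rfl
    have := ih (D.comp (.appL .hole a)) z w hw hb (by rw [e1]; exact hz)
      (by rw [e1, e2]; exact hp) (by rw [e3, e4]; exact hlo)
    rw [e1, e2] at this
    exact this
  | appR p C₁ ih =>
    intro D z w hw hb hz hg hlo
    simp [Ctx.binders] at hb
    simp only [Ctx.plug, Good] at hg ⊢
    obtain ⟨hp, ha, _⟩ := hg
    obtain ⟨hneu, hfv⟩ := esta (p := p) (a := C₁.plug (.var z)) rfl hlo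
    refine ⟨hp, ?_, Or.inr ⟨hneu, hfv⟩⟩
    have e1 : fbnd (D.comp (.appR p .hole)) false ∅ = fbnd D false ∅ := by
      rw [fbnd_comp]; simp [fbnd]
    have e2 : flg (D.comp (.appR p .hole)) false = false := by
      rw [flg_comp]; simp [flg]
    have e3 : (D.comp (.appR p .hole)).comp C₁ = D.comp (.appR p C₁) := by
      rw [comp_assoc]; simp [Ctx.comp]
    have e4 : ∀ v : Term, (D.comp (.appR p .hole)).plug v = D.plug (.app p v) := by
      intro v; rw [plug_comp]; rfl
    have := ih (D.comp (.appR p .hole)) z w hw hb (by rw [e1]; exact hz)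
      (by rw [e1, e2]; exact ha) (by rw [e3, e4]; exact hlo)
    rw [e1, e2] at this
    exact this
  | subL C₁ y u ih =>
    intro D z w hw hb hz hg hlo
    simp [Ctx.binders] at hb
    simp only [Ctx.plug, Good] at hg ⊢
    obtain ⟨hbody, hu, hcond⟩ := hg
    have huT : IsSubTSkel u.skel T := by
      rcases hcond with hl | ⟨_, hfv, _⟩
      · exact hl
      · exfalso
        have hm : z ∈ (C₁.plug (.var z)).fv ∩ insert y (fbnd D false ∅) :=
          Finset.mem_inter.mpr ⟨occ_fv hb.2, Finset.mem_insert_of_mem hz⟩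
        rw [hfv] at hm
        simp at hm
    refine ⟨?_, hu, Or.inl huT⟩
    have e1 : fbnd (D.comp (.subL .hole y u)) false ∅ = insert y (fbnd D false ∅) := by
      rw [fbnd_comp]; simp [fbnd]
    have e2 : flg (D.comp (.subL .hole y u)) false = flg D false := by
      rw [flg_comp]; simp [flg]
    have e3 : (D.comp (.subL .hole y u)).comp C₁ = D.comp (.subL C₁ y u) := by
      rw [comp_assoc]; simp [Ctx.comp]
    have e4 : ∀ v : Term, (D.comp (.subL .hole y u)).plug v = D.plug (.sub v y u) := by
      intro v; rw [plug_comp]; rfl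
    have := ih (D.comp (.subL .hole y u)) z w hw hb.2
      (by rw [e1]; exact Finset.mem_insert_of_mem hz)
      (by rw [e1, e2]; exact hbody) (by rw [e3, e4]; exact hlo)
    rw [e1, e2] at this
    exact this
  | subR s₀ y C₁ ih =>
    intro D z w hw hb hz hg hlo
    simp [Ctx.binders] at hb
    simp only [Ctx.plug, Good] at hg ⊢
    obtain ⟨hbody, hu, _⟩ := hg
    obtain ⟨hn, hfv2, hcl⟩ := ests (s₀ := s₀) (u₀ := C₁.plug (.var z)) rfl hlo
    refine ⟨hbody, ?_, Or.inr ⟨hn, hfv2, hcl⟩⟩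
    have e1 : fbnd (D.comp (.subR s₀ y .hole)) false ∅ = fbnd D false ∅ := by
      rw [fbnd_comp]; simp [fbnd]
    have e2 : flg (D.comp (.subR s₀ y .hole)) false = false := by
      rw [flg_comp]; simp [flg]
    have e3 : (D.comp (.subR s₀ y .hole)).comp C₁ = D.comp (.subR s₀ y C₁) := by
      rw [comp_assoc]; simp [Ctx.comp]
    have e4 : ∀ v : Term, (D.comp (.subR s₀ y .hole)).plug v = D.plug (.sub s₀ y v) := by
      intro v; rw [plug_comp]; rfl
    have := ih (D.comp (.subR s₀ y .hole)) z w hw hb (by rw [e1]; exact hz)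
      (by rw [e1, e2]; exact hu) (by rw [e3, e4]; exact hlo)
    rw [e1, e2] at this
    exact this


/- ===== one-step preservation of the invariant ===== -/

lemma pres {T : TSkel} (hT : NS T) :
    ∀ (P D : Ctx) (s s' : Term),
      StepAt P s s' →
      Good T s (fbnd D false ∅) (flg D false) →
      IsLOPos (D.plug s) (D.comp P) →
      Good T s' (fbnd D false ∅) (flg D false) := by
  intro P
  induction P with
  | hole =>
    intro D s s' hstep hg hlo
    rcases hstep with ⟨t', u', hroot, hs, hu⟩ | ⟨w, C', C, x, hb, hCp, ht, hu⟩
    · simp only [Ctx.plug] at hs hu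
      subst hs; subst hu
      obtain ⟨L, x, b, a, hL, hts, hus⟩ := hroot
      subst hts; subst hus
      simp only [Good] at hg
      obtain ⟨hp, ha, hcond⟩ := hg
      have haT : IsSubTSkel a.skel T := by
        rcases hcond with hl | ⟨hneu, _⟩
        · exact hl
        · exact absurd ⟨L, x, b, hL, rfl⟩ hneu.2
      exact gm hT hL hp haT
    · obtain ⟨_, h2⟩ := comp_eq_hole hCp.symm
      simp at h2
  | lam y P₁ ih =>
    intro D s s' hstep hg hlo
    obtain ⟨c, c', hs, hs', h1⟩ := stepAt_lam_inv hstep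
    subst hs; subst hs'
    simp only [Good] at hg ⊢
    have e1 : fbnd (D.comp (.lam y .hole)) false ∅ =
        (if flg D false then insert y (fbnd D false ∅) else (fbnd D false ∅).erase y) := by
      rw [fbnd_comp]; simp [fbnd]
    have e2 : flg (D.comp (.lam y .hole)) false = flg D false := by
      rw [flg_comp]; simp [flg]
    have e3 : (D.comp (.lam y .hole)).comp P₁ = D.comp (.lam y P₁) := by
      rw [comp_assoc]; simp [Ctx.comp]
    have e4 : ∀ v : Term, (D.comp (.lam y .hole)).plug v = D.plug (.lam y v) := by
      intro v; rw [plug_comp]; rfl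
    have := ih (D.comp (.lam y .hole)) c c' h1 (by rw [e1, e2]; exact hg)
      (by rw [e3, e4]; exact hlo)
    rw [e1, e2] at this
    exact this
  | appL P₁ a ih =>
    intro D s s' hstep hg hlo
    obtain ⟨c, c', hs, hs', h1⟩ := stepAt_appL_inv hstep
    subst hs; subst hs'
    simp only [Good] at hg ⊢
    obtain ⟨hp, ha, hcond⟩ := hg
    have haT : IsSubTSkel a.skel T := by
      rcases hcond with hl | ⟨hneu, _⟩
      · exact hl
      · exact absurd ⟨P₁, h1⟩ (hneu.1 c')
    refine ⟨?_, ha, Or.inl haT⟩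
    have e1 : fbnd (D.comp (.appL .hole a)) false ∅ = fbnd D false ∅ := by
      rw [fbnd_comp]; simp [fbnd]
    have e2 : flg (D.comp (.appL .hole a)) false = true := by
      rw [flg_comp]; simp [flg]
    have e3 : (D.comp (.appL .hole a)).comp P₁ = D.comp (.appL P₁ a) := by
      rw [comp_assoc]; simp [Ctx.comp]
    have e4 : ∀ v : Term, (D.comp (.appL .hole a)).plug v = D.plug (.app v a) := by
      intro v; rw [plug_comp]; rfl
    have := ih (D.comp (.appL .hole a)) c c' h1 (by rw [e1, e2]; exact hp)
      (by rw [e3, e4]; exact hlo)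
    rw [e1, e2] at this
    exact this
  | appR p P₁ ih =>
    intro D s s' hstep hg hlo
    obtain ⟨c, c', hs, hs', h1⟩ := stepAt_appR_inv hstep
    subst hs; subst hs'
    simp only [Good] at hg ⊢
    obtain ⟨hp, ha, _⟩ := hg
    obtain ⟨hneu, hfv⟩ := esta (p := p) (a := c) rfl hlo
    refine ⟨hp, ?_, Or.inr ⟨hneu, hfv⟩⟩
    have e1 : fbnd (D.comp (.appR p .hole)) false ∅ = fbnd D false ∅ := by
      rw [fbnd_comp]; simp [fbnd]
    have e2 : flg (D.comp (.appR p .hole)) false = false := by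
      rw [flg_comp]; simp [flg]
    have e3 : (D.comp (.appR p .hole)).comp P₁ = D.comp (.appR p P₁) := by
      rw [comp_assoc]; simp [Ctx.comp]
    have e4 : ∀ v : Term, (D.comp (.appR p .hole)).plug v = D.plug (.app p v) := by
      intro v; rw [plug_comp]; rfl
    have := ih (D.comp (.appR p .hole)) c c' h1 (by rw [e1, e2]; exact ha)
      (by rw [e3, e4]; exact hlo)
    rw [e1, e2] at this
    exact this
  | subL P₁ y u ih =>
    intro D s s' hstep hg hlo
    have e1 : fbnd (D.comp (.subL .hole y u)) false ∅ = insert y (fbnd D false ∅) := by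
      rw [fbnd_comp]; simp [fbnd]
    have e2 : flg (D.comp (.subL .hole y u)) false = flg D false := by
      rw [flg_comp]; simp [flg]
    have e3 : (D.comp (.subL .hole y u)).comp P₁ = D.comp (.subL P₁ y u) := by
      rw [comp_assoc]; simp [Ctx.comp]
    have e4 : ∀ v : Term, (D.comp (.subL .hole y u)).plug v = D.plug (.sub v y u) := by
      intro v; rw [plug_comp]; rfl
    rcases stepAt_subL_inv hstep with ⟨c, c', hs, hs', h1⟩ | ⟨hs, hs', hbx⟩
    · subst hs; subst hs'
      simp only [Good] at hg ⊢
      obtain ⟨hbody, hu, hcond⟩ := hg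
      have huT : IsSubTSkel u.skel T := by
        rcases hcond with hl | ⟨hn, _, _⟩
        · exact hl
        · exact absurd ⟨P₁, h1⟩ (hn c')
      refine ⟨?_, hu, Or.inl huT⟩
      have := ih (D.comp (.subL .hole y u)) c c' h1 (by rw [e1, e2]; exact hbody)
        (by rw [e3, e4]; exact hlo)
      rw [e1, e2] at this
      exact this
    · subst hs; subst hs'
      simp only [Good] at hg ⊢
      obtain ⟨hbody, hu, hcond⟩ := hg
      have huT : IsSubTSkel u.skel T := by
        rcases hcond with hl | ⟨_, hfv, _⟩
        · exact hl
        · exfalso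
          have hm : y ∈ (P₁.plug (.var y)).fv ∩ insert y (fbnd D false ∅) :=
            Finset.mem_inter.mpr ⟨occ_fv hbx, Finset.mem_insert_self _ _⟩
          rw [hfv] at hm
          simp at hm
      refine ⟨?_, hu, Or.inl huT⟩
      have := rep hT P₁ (D.comp (.subL .hole y u)) y u huT hbx
        (by rw [e1]; exact Finset.mem_insert_self _ _)
        (by rw [e1, e2]; exact hbody) (by rw [e3, e4]; exact hlo)
      rw [e1, e2] at this
      exact this
  | subR s₀ y P₁ ih =>
    intro D s s' hstep hg hlo
    obtain ⟨c, c', hs, hs', h1⟩ := stepAt_subR_inv hstep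
    subst hs; subst hs'
    simp only [Good] at hg ⊢
    obtain ⟨hbody, hu, _⟩ := hg
    obtain ⟨hn, hfv2, hcl⟩ := ests (s₀ := s₀) (u₀ := c) rfl hlo
    refine ⟨hbody, ?_, Or.inr ⟨hn, hfv2, hcl⟩⟩
    have e1 : fbnd (D.comp (.subR s₀ y .hole)) false ∅ = fbnd D false ∅ := by
      rw [fbnd_comp]; simp [fbnd]
    have e2 : flg (D.comp (.subR s₀ y .hole)) false = false := by
      rw [flg_comp]; simp [flg]
    have e3 : (D.comp (.subR s₀ y .hole)).comp P₁ = D.comp (.subR s₀ y P₁) := by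
      rw [comp_assoc]; simp [Ctx.comp]
    have e4 : ∀ v : Term, (D.comp (.subR s₀ y .hole)).plug v = D.plug (.sub s₀ y v) := by
      intro v; rw [plug_comp]; rfl
    have := ih (D.comp (.subR s₀ y .hole)) c c' h1 (by rw [e1, e2]; exact hu)
      (by rw [e3, e4]; exact hlo)
    rw [e1, e2] at this
    exact this


lemma good_reach {t r : Term} (hT : NS t.skel)
    (hred : Relation.ReflTransGen LOStep t r) : Good t.skel r ∅ false := by
  induction hred with
  | refl => exact good_clean hT t (.refl _) ∅ false
  | tail _ hbc ih =>
    obtain ⟨C₀, hst, hlo₀⟩ := hbc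
    exact pres hT C₀ .hole _ _ hst ih hlo₀

/-- Subterm property for linear LO reduction: every term duplicated by an LO
exponential step along an LO derivation from a pure term `t` is a subterm of
`t`, up to renaming of variables. -/
theorem subterm_property_lo (t : Term) (hpure : t.isPure)
    (r : Term) (hred : Relation.ReflTransGen LOStep t r)
    (C : Ctx) (u w : Term)
    (hstep : EStepAtDup C r u w) (hlo : IsLOPos r C) :
    IsSubTSkel w.skel t.skel := by
  have hTn : NS t.skel := pure_skel_ns t hpure
  have hGood : Good t.skel r ∅ false := good_reach hTn hred
  obtain ⟨C', C₀, x, hb, hCp, ht, hu⟩ := hstep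
  have hr : r = C'.plug (.sub (C₀.plug (.var x)) x w) := by
    rw [ht, hCp, plug_comp]; rfl
  rw [hr] at hGood
  obtain ⟨B', h', hg⟩ := gdesc C' hGood
  simp only [Good] at hg
  rcases hg.2.2 with hl | ⟨_, hfv, _⟩
  · exact hl
  · exfalso
    have hm : x ∈ (C₀.plug (.var x)).fv ∩ insert x B' :=
      Finset.mem_inter.mpr ⟨occ_fv hb, Finset.mem_insert_self _ _⟩
    rw [hfv] at hm
    simp at hm
end
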